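/- arXiv:2002.06529 — 6 statements merged into one kernel-verified Lean document; each statement's English description precedes it below -/
import Mathlib

section
/- Let q ≥ 2 be an even integer, m ≥ 4 an integer, π a permutation of {0,1,…,m−3}, and c ∈ ℤ_q. For d ∈ {0,1} define ζ^d, η^d : {0,1}^{m−2} → {0,1} by ζ^d(x) = Σ_{α=0}^{m−4} x_{π(α)}·x_{π(α+1)} + d·x_{π(m−3)} (mod 2) and η^d(x) = Σ_{α=0}^{m−4} (1−x_{π(α)})·(1−x_{π(α+1)}) + (1−d)·(1−x_{π(m−3)}) + d (mod 2), and define g^d : {0,1}^m → ℤ_q by g^d(x) = (q/2)·[(1−x_{m−1})·x_{m−2}·ζ^d(x_0,…,x_{m−3}) + x_{m−1}·(1−x_{m−2})·η^d(x_0,…,x_{m−3}) + (1−d)·x_{m−1}·x_{m−2}] + c (mod q). Let ω = exp(2πi/q), L = 2^{m−2}−1, and define complex sequences a, b of length 2^{m−1}+2 by a_k = ω^{g^0(r_{k+L,0},…,r_{k+L,m−1})} and b_k = ω^{g^1(r_{k+L,0},…,r_{k+L,m−1})} for 0 ≤ k < 2^{m−1}+2, where r_{i,j} is the j-th binary digit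 of i. Then (a,b) is a (2^{m−1}+2, 2^{π(m−3)}+1)-CZCP. -/
/-!
Cut the index range `[0, 2^m)` into quarters of length `N = 2^(m-2)`. On the second quarter
`g^d = (q/2) ζ^d + c`, on the third `g^d = (q/2) η^d + c`, and `η^d` is `ζ^(1-d)` of the bitwise
complement, shifted by `d`. So, up to the unimodular factor `ω^c`, the truncated pair is
`a = (1, A, reverse C, -1)`, `b = (1, C, -reverse A, 1)`, where `A = (-1)^ζ⁰`, `C = (-1)^ζ¹` is the
Davis–Jedwab Golay pair of the path `π(0) - ⋯ - π(m-3)`, and `A`, `C` agree on their first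
`Z = 2^π(m-3)` entries.

`(A, C)` is a Golay pair by the usual sign-reversing involution: on a pair of indices `(i, i + τ)`
whose last path bits agree, flip in both the bit at the path vertex following the last one where
they differ; this keeps the difference `τ` and changes the sum of the two quadratic forms by one.

For `1 ≤ τ ≤ N` the autocorrelation of `(a, b)` splits into two Golay sums of `(A, C)`, an
antisymmetric middle part and two boundary terms that cancel. For `τ ≥ 2N + 1 - Z` only the
first `Z + 1` entries, where `b = a`, meet the last `Z + 1`, where `b = -a`, so the auto- and
cross-correlation sums cancel term by term.
-/

/-- Aperiodic cross-correlation at shift `τ` of two length-`L` complex sequences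
(indexed `0, …, L-1`); it vanishes for `τ ≥ L`. -/
noncomputable def rhoC (L : ℕ) (u v : ℕ → ℂ) (τ : ℕ) : ℂ :=
  ∑ k ∈ Finset.range (L - τ), u k * (starRingEnd ℂ) (v (k + τ))

/-- `(u, v)` (length-`L` complex sequences) is an `(L, Z)`-CZCP:
(C1) the autocorrelation sums vanish for `τ ∈ {1,…,Z} ∪ {L-Z,…,L-1}`, and
(C2) the cross-correlation sums vanish for `τ ∈ {L-Z,…,L-1}`. -/
noncomputable def IsCZCP (L Z : ℕ) (u v : ℕ → ℂ) : Prop :=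
  (∀ τ : ℕ, ((1 ≤ τ ∧ τ ≤ Z) ∨ (L - Z ≤ τ ∧ τ ≤ L - 1)) →
    rhoC L u u τ + rhoC L v v τ = 0) ∧
  (∀ τ : ℕ, (L - Z ≤ τ ∧ τ ≤ L - 1) → rhoC L u v τ + rhoC L v u τ = 0)

open Set ComplexConjugate

namespace Nat

theorem xor_two_pow_of_testBit_eq_false {x p : ℕ} (hx : x.testBit p = false) :
    x ^^^ 2 ^ p = x + 2 ^ p := by
  obtain ⟨y, z, hz, rfl⟩ : ∃ y z, z < 2 ^ p ∧ x = 2 ^ p * y + z :=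
    ⟨x / 2 ^ p, x % 2 ^ p, Nat.mod_lt _ (Nat.two_pow_pos p), (Nat.div_add_mod x _).symm⟩
  rw [testBit_two_pow_mul_add _ hz, if_neg (lt_irrefl p), Nat.sub_self, testBit_zero,
    decide_eq_false_iff_not, ← ne_eq, mod_two_ne_one, ← even_iff] at hx
  rw [show 2 ^ p * y + z + 2 ^ p = 2 ^ p * (y ^^^ 1) + z by rw [xor_one_of_even hx]; ring]
  refine eq_of_testBit_eq fun r => ?_
  rw [testBit_xor, testBit_two_pow, testBit_two_pow_mul_add _ hz, testBit_two_pow_mul_add _ hz,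
    testBit_xor]
  rcases lt_trichotomy r p with h | rfl | h
  · simp [h, h.ne']
  · simp
  · have h1 : testBit 1 (r - p) = false := testBit_lt_two_pow (Nat.one_lt_two_pow (by omega))
    simp [h.ne, not_lt.2 h.le, h1]

theorem xor_two_pow_add_two_pow_of_testBit_eq_true {x p : ℕ} (hx : x.testBit p = true) :
    (x ^^^ 2 ^ p) + 2 ^ p = x := by
  rw [← xor_two_pow_of_testBit_eq_false (by simp [hx]), Nat.xor_assoc, Nat.xor_self, xor_zero]

theorem add_xor_two_pow_of_testBit_eq {x t p : ℕ} (h : x.testBit p = (x + t).testBit p) :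
    (x + t) ^^^ 2 ^ p = (x ^^^ 2 ^ p) + t := by
  cases hx : x.testBit p
  · rw [xor_two_pow_of_testBit_eq_false hx, xor_two_pow_of_testBit_eq_false (h ▸ hx)]
    ring
  · have h1 := xor_two_pow_add_two_pow_of_testBit_eq_true hx
    have h2 := xor_two_pow_add_two_pow_of_testBit_eq_true (h ▸ hx)
    omega

end Nat

lemma ZMod.neg_one_pow_val_add {R : Type*} [Ring R] (x y : ZMod 2) :
    (-1 : R) ^ (x + y).val = (-1) ^ x.val * (-1) ^ y.val := by
  rw [ZMod.val_add, ← pow_add, ← neg_one_pow_eq_pow_mod_two]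

lemma ZMod.neg_one_pow_val_add_one {R : Type*} [Ring R] (x : ZMod 2) :
    (-1 : R) ^ (x + 1).val = -(-1) ^ x.val := by
  rw [ZMod.neg_one_pow_val_add, ZMod.val_one, pow_one, mul_neg_one]

lemma sum_range_mul_succ_of_eq_add_ite {R : Type*} [CommRing R] (x y : ℕ → R) {n v : ℕ}
    (hv : v < n) (hy : ∀ α ≤ n, y α = x α + if α = v + 1 then 1 else 0) :
    ∑ α ∈ Finset.range n, y α * y (α + 1) =
      ∑ α ∈ Finset.range n, x α * x (α + 1) + x v + if v + 1 < n then x (v + 2) else 0 := by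
  have hterm : ∀ α ∈ Finset.range n, y α * y (α + 1) = x α * x (α + 1)
      + (if α = v then x v else 0) + (if α = v + 1 then x (v + 2) else 0) := by
    intro α hα
    rw [Finset.mem_range] at hα
    rw [hy α (by omega), hy (α + 1) (by omega)]
    split_ifs <;> subst_vars <;> first | omega | ring
  rw [Finset.sum_congr rfl hterm, Finset.sum_add_distrib, Finset.sum_add_distrib,
    Finset.sum_ite_eq', Finset.sum_ite_eq', if_pos (Finset.mem_range.2 hv)]
  simp only [Finset.mem_range]

lemma sum_range_eq_zero_of_reflect_eq_neg {n : ℕ} {f : ℕ → ℂ}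
    (h : ∀ i < n, f (n - 1 - i) = -f i) : ∑ i ∈ Finset.range n, f i = 0 := by
  have hrefl := Finset.sum_range_reflect f n
  rw [Finset.sum_congr rfl fun i hi => h i (Finset.mem_range.1 hi), Finset.sum_neg_distrib]
    at hrefl
  linear_combination -hrefl / 2

lemma IsPrimitiveRoot.pow_mod_half_mul_add {R : Type*} [CommRing R] [NoZeroDivisors R] {ω : R}
    {q : ℕ} (hω : IsPrimitiveRoot ω q) (hq : Even q) (hq0 : q ≠ 0) (E c : ℕ) :
    ω ^ ((q / 2 * E + c) % q) = (-1) ^ E * ω ^ c := by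
  obtain ⟨r, rfl⟩ := hq
  have hr : r ≠ 0 := by omega
  have h2 : (r + r) / r = 2 := by rw [← two_mul, Nat.mul_div_cancel _ (Nat.pos_of_ne_zero hr)]
  have hhalf : ω ^ r = -1 := (h2 ▸ hω.pow_of_dvd hr ⟨2, by ring⟩).eq_neg_one_of_two_right
  have hmod (x : ℕ) : ω ^ (x % (r + r)) = ω ^ x := by
    conv_rhs => rw [← Nat.mod_add_div x (r + r), pow_add, pow_mul, hω.pow_eq_one, one_pow, mul_one]
  rw [hmod, pow_add, show (r + r) / 2 = r by omega, pow_mul, hhalf]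

section PathForm

def bitZ (p i : ℕ) : ZMod 2 := (i.testBit p).toNat

lemma bitZ_xor_two_pow (r p i : ℕ) :
    bitZ r (i ^^^ 2 ^ p) = bitZ r i + if p = r then 1 else 0 := by
  unfold bitZ
  rw [Nat.testBit_xor, Nat.testBit_two_pow]
  by_cases h : p = r <;> cases i.testBit r <;> simp [h]; decide

lemma bitZ_add_bitZ_of_testBit_eq {r i j : ℕ} (h : i.testBit r = j.testBit r) :
    bitZ r i + bitZ r j = 0 := by
  rw [bitZ, bitZ, h, CharTwo.add_self_eq_zero]

lemma bitZ_add_bitZ_of_testBit_ne {r i j : ℕ} (h : i.testBit r ≠ j.testBit r) :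
    bitZ r i + bitZ r j = 1 := by
  unfold bitZ
  cases hi : i.testBit r <;> cases hj : j.testBit r <;> simp_all

variable {σ : ℕ → ℕ} {n : ℕ}

def pathForm (σ : ℕ → ℕ) (n i : ℕ) : ZMod 2 :=
  ∑ α ∈ Finset.range n, bitZ (σ α) i * bitZ (σ (α + 1)) i

lemma pathForm_xor_two_pow (hσ : InjOn σ (Iio (n + 1))) {v : ℕ} (hv : v < n) (i : ℕ) :
    pathForm σ n (i ^^^ 2 ^ σ (v + 1)) = pathForm σ n i + bitZ (σ v) i +
      if v + 1 < n then bitZ (σ (v + 2)) i else 0 :=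
  sum_range_mul_succ_of_eq_add_ite _ _ hv fun α hα => by
    rw [bitZ_xor_two_pow]
    exact congrArg _ (if_congr ((hσ.eq_iff (by simp; omega) (by simp; omega)).trans eq_comm) rfl rfl)

def lastDiff (σ : ℕ → ℕ) (n i j : ℕ) : ℕ :=
  Nat.findGreatest (fun α => i.testBit (σ α) ≠ j.testBit (σ α)) n

lemma lastDiff_xor_two_pow (i j p : ℕ) :
    lastDiff σ n (i ^^^ 2 ^ p) (j ^^^ 2 ^ p) = lastDiff σ n i j := by
  simp [lastDiff, Nat.testBit_xor]

lemma testBit_lastDiff_ne (hσ : SurjOn σ (Iio (n + 1)) (Iio (n + 1))) {i j : ℕ}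
    (hi : i < 2 ^ (n + 1)) (hj : j < 2 ^ (n + 1)) (hij : i ≠ j) :
    i.testBit (σ (lastDiff σ n i j)) ≠ j.testBit (σ (lastDiff σ n i j)) := by
  obtain ⟨r, hr⟩ : ∃ r, i.testBit r ≠ j.testBit r := by
    by_contra! h
    exact hij (Nat.eq_of_testBit_eq h)
  have hrn : r < n + 1 := by
    by_contra! h
    have h2 := Nat.pow_le_pow_right two_pos h
    rw [Nat.testBit_lt_two_pow (hi.trans_le h2), Nat.testBit_lt_two_pow (hj.trans_le h2)] at hr
    exact hr rfl
  obtain ⟨α, hα, rfl⟩ := hσ hrn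
  exact Nat.findGreatest_spec (P := fun α => i.testBit (σ α) ≠ j.testBit (σ α))
    (Nat.lt_succ_iff.1 hα) hr

lemma testBit_eq_of_lastDiff_lt {i j α : ℕ} (h : lastDiff σ n i j < α) (hα : α ≤ n) :
    i.testBit (σ α) = j.testBit (σ α) := by
  simpa using Nat.findGreatest_is_greatest h hα

lemma lastDiff_lt (hσ : SurjOn σ (Iio (n + 1)) (Iio (n + 1))) {i j : ℕ}
    (hi : i < 2 ^ (n + 1)) (hj : j < 2 ^ (n + 1)) (hij : i ≠ j)
    (htop : i.testBit (σ n) = j.testBit (σ n)) : lastDiff σ n i j < n :=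
  lt_of_le_of_ne (Nat.findGreatest_le n) fun h =>
    testBit_lastDiff_ne hσ hi hj hij (by rw [h]; exact htop)

/-- Flipping vertex `lastDiff + 1` changes each form by the bits at its two path neighbours:
those at `lastDiff` differ between `i` and `j`, those at `lastDiff + 2` agree. -/
theorem pathForm_xor_add_pathForm_xor (hσ : BijOn σ (Iio (n + 1)) (Iio (n + 1))) {i j : ℕ}
    (hi : i < 2 ^ (n + 1)) (hj : j < 2 ^ (n + 1)) (hij : i ≠ j)
    (htop : i.testBit (σ n) = j.testBit (σ n)) :
    pathForm σ n (i ^^^ 2 ^ σ (lastDiff σ n i j + 1)) +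
      pathForm σ n (j ^^^ 2 ^ σ (lastDiff σ n i j + 1)) = pathForm σ n i + pathForm σ n j + 1 := by
  have hdiff := testBit_lastDiff_ne hσ.surjOn hi hj hij
  have hv := lastDiff_lt hσ.surjOn hi hj hij htop
  set v := lastDiff σ n i j
  rw [pathForm_xor_two_pow hσ.injOn hv, pathForm_xor_two_pow hσ.injOn hv]
  have h1 : bitZ (σ v) i + bitZ (σ v) j = 1 := bitZ_add_bitZ_of_testBit_ne hdiff
  have h2 : ((if v + 1 < n then bitZ (σ (v + 2)) i else 0) +
      if v + 1 < n then bitZ (σ (v + 2)) j else 0) = 0 := by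
    split_ifs
    · exact bitZ_add_bitZ_of_testBit_eq (testBit_eq_of_lastDiff_lt (n := n) (by omega) (by omega))
    · exact add_zero 0
  linear_combination h1 + h2

/-- The sign-reversing involution on the pairs `(i, i + τ)` whose top path bits agree. -/
def golayFlip (σ : ℕ → ℕ) (n τ i : ℕ) : ℕ :=
  if i.testBit (σ n) = (i + τ).testBit (σ n) then i ^^^ 2 ^ σ (lastDiff σ n i (i + τ) + 1) else i

lemma golayFlip_of_testBit_ne {τ i : ℕ} (h : i.testBit (σ n) ≠ (i + τ).testBit (σ n)) :
    golayFlip σ n τ i = i :=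
  if_neg h

theorem golayFlip_spec (hσ : BijOn σ (Iio (n + 1)) (Iio (n + 1))) {τ i : ℕ} (hτ : 1 ≤ τ)
    (hi : i + τ < 2 ^ (n + 1)) (htop : i.testBit (σ n) = (i + τ).testBit (σ n)) :
    golayFlip σ n τ i + τ < 2 ^ (n + 1) ∧
      (golayFlip σ n τ i).testBit (σ n) = (golayFlip σ n τ i + τ).testBit (σ n) ∧
      golayFlip σ n τ (golayFlip σ n τ i) = i ∧
      pathForm σ n (golayFlip σ n τ i) + pathForm σ n (golayFlip σ n τ i + τ) =
        pathForm σ n i + pathForm σ n (i + τ) + 1 := by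
  have hne : i ≠ i + τ := by omega
  have hv := lastDiff_lt hσ.surjOn (by omega) hi hne htop
  set p := σ (lastDiff σ n i (i + τ) + 1)
  have hadd : (i ^^^ 2 ^ p) + τ = (i + τ) ^^^ 2 ^ p :=
    (Nat.add_xor_two_pow_of_testBit_eq (testBit_eq_of_lastDiff_lt (n := n) (lt_add_one _) hv)).symm
  have htop' : (i ^^^ 2 ^ p).testBit (σ n) = ((i ^^^ 2 ^ p) + τ).testBit (σ n) := by
    rw [hadd, Nat.testBit_xor, Nat.testBit_xor, htop]
  have hlast : lastDiff σ n (i ^^^ 2 ^ p) ((i ^^^ 2 ^ p) + τ) = lastDiff σ n i (i + τ) := by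
    rw [hadd, lastDiff_xor_two_pow]
  rw [golayFlip, if_pos htop]
  refine ⟨hadd ▸ Nat.xor_lt_two_pow hi ?_, htop', ?_, ?_⟩
  · exact Nat.pow_lt_pow_right one_lt_two (hσ.mapsTo (by simp; omega))
  · rw [golayFlip, if_pos htop', hlast, Nat.xor_assoc, Nat.xor_self, Nat.xor_zero]
  · rw [hadd]
    exact pathForm_xor_add_pathForm_xor hσ (by omega) hi hne htop

theorem sum_neg_one_pow_pathForm_autocorr_eq_zero {R : Type*} [CommRing R]
    (hσ : BijOn σ (Iio (n + 1)) (Iio (n + 1))) {τ : ℕ} (hτ : 1 ≤ τ) :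
    ∑ i ∈ Finset.range (2 ^ (n + 1) - τ),
      ((-1 : R) ^ (pathForm σ n i).val * (-1) ^ (pathForm σ n (i + τ)).val +
        (-1) ^ (pathForm σ n i + bitZ (σ n) i).val *
          (-1) ^ (pathForm σ n (i + τ) + bitZ (σ n) (i + τ)).val) = 0 := by
  set Q := pathForm σ n
  set x := bitZ (σ n)
  have hfactor : ∀ i, (-1 : R) ^ (Q i).val * (-1) ^ (Q (i + τ)).val +
      (-1) ^ (Q i + x i).val * (-1) ^ (Q (i + τ) + x (i + τ)).val =
      (-1) ^ (Q i + Q (i + τ)).val * (1 + (-1) ^ (x i + x (i + τ)).val) := by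
    intro i
    simp only [ZMod.neg_one_pow_val_add]
    ring
  have hvanish : ∀ i, i.testBit (σ n) ≠ (i + τ).testBit (σ n) →
      (-1 : R) ^ (Q i + Q (i + τ)).val * (1 + (-1) ^ (x i + x (i + τ)).val) = 0 :=
    fun i h => by simp [x, bitZ_add_bitZ_of_testBit_ne h, ZMod.val_one]
  simp only [hfactor]
  refine Finset.sum_involution (fun i _ => golayFlip σ n τ i) (fun i hi => ?_) (fun i hi hf => ?_)
    (fun i hi => ?_) (fun i hi => ?_) <;> rw [Finset.mem_range] at hi <;>
    by_cases htop : i.testBit (σ n) = (i + τ).testBit (σ n)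
  · obtain ⟨-, htop', -, hQ⟩ := golayFlip_spec hσ hτ (by omega) htop
    rw [hQ, bitZ_add_bitZ_of_testBit_eq htop, bitZ_add_bitZ_of_testBit_eq htop',
      ZMod.neg_one_pow_val_add_one]
    ring
  · rw [golayFlip_of_testBit_ne htop, hvanish i htop, add_zero]
  · intro h
    simpa [h] using (golayFlip_spec hσ hτ (by omega) htop).2.2.2
  · exact absurd (hvanish i htop) hf
  · have := (golayFlip_spec hσ hτ (by omega) htop).1
    rw [Finset.mem_range]
    omega
  · rwa [golayFlip_of_testBit_ne htop, Finset.mem_range]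
  · exact (golayFlip_spec hσ hτ (by omega) htop).2.2.1
  · rw [golayFlip_of_testBit_ne htop, golayFlip_of_testBit_ne htop]

end PathForm

section Correlation

variable {L : ℕ} {u v u' v' : ℕ → ℂ}

lemma rhoC_congr {τ : ℕ} (hu : ∀ k < L, u' k = u k) (hv : ∀ k < L, v' k = v k) :
    rhoC L u' v' τ = rhoC L u v τ :=
  Finset.sum_congr rfl fun k hk => by
    rw [Finset.mem_range] at hk
    rw [hu k (by omega), hv (k + τ) (by omega)]

lemma rhoC_mul_right {w : ℂ} (hw : ‖w‖ = 1) (τ : ℕ) :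
    rhoC L (fun k => u k * w) (fun k => v k * w) τ = rhoC L u v τ := by
  have hww : w * conj w = 1 := by rw [Complex.mul_conj', hw]; norm_num
  refine Finset.sum_congr rfl fun k _ => ?_
  rw [map_mul]
  linear_combination u k * conj (v (k + τ)) * hww

lemma rhoC_eq_sum_of_conj_eq {τ : ℕ} (hv : ∀ k, conj (v k) = v k) :
    rhoC L u v τ = ∑ k ∈ Finset.range (L - τ), u k * v (k + τ) := by
  simp only [rhoC, hv]

lemma rhoC_add_rhoC_eq_zero_of_eq_of_eq_neg {τ : ℕ}
    (h : ∀ k < L - τ, v k = u k ∧ v (k + τ) = -u (k + τ)) :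
    rhoC L u u τ + rhoC L v v τ = 0 ∧ rhoC L u v τ + rhoC L v u τ = 0 := by
  simp only [rhoC, ← Finset.sum_add_distrib]
  constructor <;> refine Finset.sum_eq_zero fun k hk => ?_ <;>
    obtain ⟨h1, h2⟩ := h k (Finset.mem_range.1 hk) <;> simp [h1, h2]

namespace IsCZCP

variable {Z : ℕ}

lemma congr (h : IsCZCP L Z u v) (hu : ∀ k < L, u' k = u k) (hv : ∀ k < L, v' k = v k) :
    IsCZCP L Z u' v' := by
  simp only [IsCZCP, rhoC_congr hu hu, rhoC_congr hv hv, rhoC_congr hu hv, rhoC_congr hv hu]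
  exact h

lemma mul_right (h : IsCZCP L Z u v) {w : ℂ} (hw : ‖w‖ = 1) :
    IsCZCP L Z (fun k => u k * w) (fun k => v k * w) := by
  simp only [IsCZCP, rhoC_mul_right hw]
  exact h

end IsCZCP

end Correlation

def IsGolayPair (N : ℕ) (A C : ℕ → ℂ) : Prop :=
  ∀ τ, 1 ≤ τ → rhoC N A A τ + rhoC N C C τ = 0

section Construction

/-- For `d ∈ {0, 1}` and sequences `S 0 = A`, `S 1 = C` of length `N`, the length-`2N + 2`
sequence `(1, S d, (-1)^d · reverse (S (1 - d)), (-1)^(1 - d))`, that is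
`(1, A, reverse C, -1)` for `d = 0` and `(1, C, -reverse A, 1)` for `d = 1`. -/
def czcpSeq (S : ℕ → ℕ → ℂ) (N d k : ℕ) : ℂ :=
  if k = 0 then 1
  else if k ≤ N then S d (k - 1)
  else if k ≤ 2 * N then (-1) ^ d * S (1 - d) (2 * N - k)
  else (-1) ^ (1 - d)

variable {S : ℕ → ℕ → ℂ} {N Z τ : ℕ}

lemma czcpSeq_zero (d : ℕ) : czcpSeq S N d 0 = 1 := if_pos rfl

lemma czcpSeq_of_le {d k : ℕ} (h1 : 1 ≤ k) (h2 : k ≤ N) : czcpSeq S N d k = S d (k - 1) := by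
  simp [czcpSeq, h2, show k ≠ 0 by omega]

lemma czcpSeq_of_lt {d k : ℕ} (h1 : N < k) (h2 : k ≤ 2 * N) :
    czcpSeq S N d k = (-1) ^ d * S (1 - d) (2 * N - k) := by
  simp [czcpSeq, h2, show k ≠ 0 by omega, show ¬k ≤ N by omega]

lemma czcpSeq_last (d : ℕ) : czcpSeq S N d (2 * N + 1) = (-1) ^ (1 - d) := by
  simp [czcpSeq, show ¬2 * N + 1 ≤ N by omega]

lemma czcpSeq_conj (hS : ∀ d j, conj (S d j) = S d j) (d k : ℕ) :
    conj (czcpSeq S N d k) = czcpSeq S N d k := by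
  unfold czcpSeq
  split_ifs <;> simp [hS]

lemma czcpSeq_one_eq_of_le (hagree : ∀ j < Z, S 0 j = S 1 j) (hZ : Z ≤ N) {k : ℕ}
    (hk : k ≤ Z) : czcpSeq S N 1 k = czcpSeq S N 0 k := by
  rcases Nat.eq_zero_or_pos k with rfl | hk0
  · rw [czcpSeq_zero, czcpSeq_zero]
  · rw [czcpSeq_of_le hk0 (hk.trans hZ), czcpSeq_of_le hk0 (hk.trans hZ), hagree _ (by omega)]

lemma czcpSeq_one_eq_neg_of_ge (hagree : ∀ j < Z, S 0 j = S 1 j) (hZ : Z < N) {k : ℕ}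
    (h1 : 2 * N + 1 - Z ≤ k) (h2 : k ≤ 2 * N + 1) : czcpSeq S N 1 k = -czcpSeq S N 0 k := by
  rcases h2.lt_or_eq with h2 | rfl
  · rw [czcpSeq_of_lt (by omega) (by omega), czcpSeq_of_lt (by omega) (by omega),
      hagree _ (by omega)]
    ring
  · rw [czcpSeq_last, czcpSeq_last]
    norm_num

lemma sum_czcpSeq_head (hτN : τ ≤ N) :
    ∑ i ∈ Finset.range (N - τ), (czcpSeq S N 0 (i + 1) * czcpSeq S N 0 (i + 1 + τ) +
      czcpSeq S N 1 (i + 1) * czcpSeq S N 1 (i + 1 + τ)) =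
    ∑ i ∈ Finset.range (N - τ), (S 0 i * S 0 (i + τ) + S 1 i * S 1 (i + τ)) := by
  refine Finset.sum_congr rfl fun i hi => ?_
  rw [Finset.mem_range] at hi
  simp only [czcpSeq_of_le (by omega : 1 ≤ i + 1) (by omega : i + 1 ≤ N),
    czcpSeq_of_le (by omega : 1 ≤ i + 1 + τ) (by omega : i + 1 + τ ≤ N), Nat.add_sub_cancel,
    show i + 1 + τ - 1 = i + τ by omega]

lemma sum_czcpSeq_middle (hτN : τ ≤ N) :
    ∑ i ∈ Finset.range τ, (czcpSeq S N 0 (N - τ + i + 1) * czcpSeq S N 0 (N - τ + i + 1 + τ) +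
      czcpSeq S N 1 (N - τ + i + 1) * czcpSeq S N 1 (N - τ + i + 1 + τ)) = 0 := by
  refine sum_range_eq_zero_of_reflect_eq_neg fun i hi => ?_
  simp only [czcpSeq_of_le (by omega : 1 ≤ N - τ + i + 1) (by omega : N - τ + i + 1 ≤ N),
    czcpSeq_of_lt (by omega : N < N - τ + i + 1 + τ) (by omega : N - τ + i + 1 + τ ≤ 2 * N),
    czcpSeq_of_le (by omega : 1 ≤ N - τ + (τ - 1 - i) + 1)
      (by omega : N - τ + (τ - 1 - i) + 1 ≤ N),
    czcpSeq_of_lt (by omega : N < N - τ + (τ - 1 - i) + 1 + τ)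
      (by omega : N - τ + (τ - 1 - i) + 1 + τ ≤ 2 * N)]
  rw [show N - τ + (τ - 1 - i) + 1 - 1 = 2 * N - (N - τ + i + 1 + τ) by omega,
    show 2 * N - (N - τ + (τ - 1 - i) + 1 + τ) = N - τ + i + 1 - 1 by omega]
  ring

lemma sum_czcpSeq_tail (hτN : τ ≤ N) :
    ∑ i ∈ Finset.range (N - τ), (czcpSeq S N 0 (N + i + 1) * czcpSeq S N 0 (N + i + 1 + τ) +
      czcpSeq S N 1 (N + i + 1) * czcpSeq S N 1 (N + i + 1 + τ)) =
    ∑ i ∈ Finset.range (N - τ), (S 0 i * S 0 (i + τ) + S 1 i * S 1 (i + τ)) := by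
  rw [← Finset.sum_range_reflect (fun j => S 0 j * S 0 (j + τ) + S 1 j * S 1 (j + τ))]
  refine Finset.sum_congr rfl fun i hi => ?_
  rw [Finset.mem_range] at hi
  simp only [czcpSeq_of_lt (by omega : N < N + i + 1) (by omega : N + i + 1 ≤ 2 * N),
    czcpSeq_of_lt (by omega : N < N + i + 1 + τ) (by omega : N + i + 1 + τ ≤ 2 * N)]
  rw [show 2 * N - (N + i + 1) = N - τ - 1 - i + τ by omega,
    show 2 * N - (N + i + 1 + τ) = N - τ - 1 - i by omega]
  ring

theorem czcpSeq_autocorr_eq_zero_of_le (hG : IsGolayPair N (S 0) (S 1))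
    (hS : ∀ d j, conj (S d j) = S d j) (hτ : 1 ≤ τ) (hτN : τ ≤ N) :
    rhoC (2 * N + 2) (czcpSeq S N 0) (czcpSeq S N 0) τ +
      rhoC (2 * N + 2) (czcpSeq S N 1) (czcpSeq S N 1) τ = 0 := by
  have hgolay := hG τ hτ
  rw [rhoC_eq_sum_of_conj_eq (hS 0), rhoC_eq_sum_of_conj_eq (hS 1), ← Finset.sum_add_distrib]
    at hgolay
  rw [rhoC_eq_sum_of_conj_eq (czcpSeq_conj hS 0), rhoC_eq_sum_of_conj_eq (czcpSeq_conj hS 1),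
    ← Finset.sum_add_distrib, show 2 * N + 2 - τ = (N - τ) + τ + (N - τ) + 1 + 1 by omega,
    Finset.sum_range_succ, Finset.sum_range_succ', Finset.sum_range_add, Finset.sum_range_add,
    Nat.sub_add_cancel hτN, sum_czcpSeq_head hτN, sum_czcpSeq_middle hτN, sum_czcpSeq_tail hτN,
    hgolay, Nat.zero_add, czcpSeq_zero, czcpSeq_zero, czcpSeq_of_le hτ hτN, czcpSeq_of_le hτ hτN,
    show N + (N - τ) + 1 + τ = 2 * N + 1 by omega, czcpSeq_last, czcpSeq_last,
    czcpSeq_of_lt (by omega) (by omega), czcpSeq_of_lt (by omega) (by omega),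
    show 2 * N - (N + (N - τ) + 1) = τ - 1 by omega]
  norm_num

theorem isCZCP_czcpSeq (hG : IsGolayPair N (S 0) (S 1)) (hS : ∀ d j, conj (S d j) = S d j)
    (hagree : ∀ j < Z, S 0 j = S 1 j) (hZ : Z < N) :
    IsCZCP (2 * N + 2) (Z + 1) (czcpSeq S N 0) (czcpSeq S N 1) := by
  have hlarge : ∀ τ, 2 * N + 2 - (Z + 1) ≤ τ → τ ≤ 2 * N + 2 - 1 →
      rhoC (2 * N + 2) (czcpSeq S N 0) (czcpSeq S N 0) τ +
          rhoC (2 * N + 2) (czcpSeq S N 1) (czcpSeq S N 1) τ = 0 ∧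
        rhoC (2 * N + 2) (czcpSeq S N 0) (czcpSeq S N 1) τ +
          rhoC (2 * N + 2) (czcpSeq S N 1) (czcpSeq S N 0) τ = 0 :=
    fun τ h1 h2 => rhoC_add_rhoC_eq_zero_of_eq_of_eq_neg fun k hk =>
      ⟨czcpSeq_one_eq_of_le hagree hZ.le (by omega),
        czcpSeq_one_eq_neg_of_ge hagree hZ (by omega) (by omega)⟩
  refine ⟨fun τ hτ => ?_, fun τ ⟨h1, h2⟩ => (hlarge τ h1 h2).2⟩
  rcases hτ with ⟨h1, h2⟩ | ⟨h1, h2⟩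
  · exact czcpSeq_autocorr_eq_zero_of_le hG hS h1 (by omega)
  · exact (hlarge τ h1 h2).1

end Construction

section BooleanFunctions

def digit (j i : ℕ) : ℕ := i / 2 ^ j % 2

lemma digit_eq_toNat_testBit (j i : ℕ) : digit j i = (i.testBit j).toNat :=
  (Nat.toNat_testBit i j).symm

lemma natCast_digit (j i : ℕ) : (digit j i : ZMod 2) = bitZ j i := by
  rw [digit_eq_toNat_testBit, bitZ]

lemma digit_two_pow_mul_add {n r : ℕ} (hr : r < 2 ^ n) (j t : ℕ) :
    digit j (2 ^ n * t + r) = if j < n then digit j r else digit (j - n) t := by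
  simp only [digit_eq_toNat_testBit, Nat.testBit_two_pow_mul_add _ hr]
  split_ifs <;> rfl

lemma digit_two_pow_sub_one_sub {n r j : ℕ} (hr : r < 2 ^ n) (hj : j < n) :
    digit j (2 ^ n - 1 - r) = 1 - digit j r := by
  rw [digit_eq_toNat_testBit, digit_eq_toNat_testBit,
    show 2 ^ n - 1 - r = 2 ^ n - (r + 1) by omega, Nat.testBit_two_pow_sub_succ hr]
  cases r.testBit j <;> simp [hj]

lemma digit_of_lt_two_pow {j r : ℕ} (h : r < 2 ^ j) : digit j r = 0 := by
  rw [digit, Nat.div_eq_of_lt h, Nat.zero_mod]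

variable {σ : ℕ → ℕ} {n : ℕ}

def zeta (σ : ℕ → ℕ) (n d i : ℕ) : ℕ :=
  ((∑ α ∈ Finset.range n, digit (σ α) i * digit (σ (α + 1)) i) + d * digit (σ n) i) % 2

def eta (σ : ℕ → ℕ) (n d i : ℕ) : ℕ :=
  ((∑ α ∈ Finset.range n, (1 - digit (σ α) i) * (1 - digit (σ (α + 1)) i))
    + (1 - d) * (1 - digit (σ n) i) + d) % 2

/-- With `n = m - 3`, `zeta σ n` and `eta σ n` are the paper's `ζ^d` and `η^d`, and
`g^d = (q/2) · gbfExp σ n d + c (mod q)`. -/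
def gbfExp (σ : ℕ → ℕ) (n d i : ℕ) : ℕ :=
  (1 - digit (n + 2) i) * digit (n + 1) i * zeta σ n d i
    + digit (n + 2) i * (1 - digit (n + 1) i) * eta σ n d i
    + (1 - d) * digit (n + 2) i * digit (n + 1) i

lemma zeta_congr {d i j : ℕ} (h : ∀ α ≤ n, digit (σ α) i = digit (σ α) j) :
    zeta σ n d i = zeta σ n d j := by
  unfold zeta
  rw [Finset.sum_congr rfl fun α hα => by
    rw [h α (by simp at hα; omega), h (α + 1) (by simp at hα; omega)], h n le_rfl]

lemma eta_congr {d i j : ℕ} (h : ∀ α ≤ n, digit (σ α) i = digit (σ α) j) :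
    eta σ n d i = eta σ n d j := by
  unfold eta
  rw [Finset.sum_congr rfl fun α hα => by
    rw [h α (by simp at hα; omega), h (α + 1) (by simp at hα; omega)], h n le_rfl]

lemma neg_one_pow_zeta {R : Type*} [Ring R] (d i : ℕ) :
    (-1 : R) ^ zeta σ n d i = (-1) ^ (pathForm σ n i + d * bitZ (σ n) i).val := by
  rw [zeta, ← ZMod.val_natCast]
  push_cast [natCast_digit]
  rfl

lemma neg_one_pow_eta {R : Type*} [Ring R] {d i j : ℕ}
    (h : ∀ α ≤ n, digit (σ α) j = 1 - digit (σ α) i) :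
    (-1 : R) ^ eta σ n d i = (-1) ^ d * (-1) ^ zeta σ n (1 - d) j := by
  have hsum : ∑ α ∈ Finset.range n, digit (σ α) j * digit (σ (α + 1)) j =
      ∑ α ∈ Finset.range n, (1 - digit (σ α) i) * (1 - digit (σ (α + 1)) i) :=
    Finset.sum_congr rfl fun α hα => by
      rw [h α (by simp at hα; omega), h (α + 1) (by simp at hα; omega)]
  rw [eta, zeta, hsum, h n le_rfl, ← neg_one_pow_eq_pow_mod_two, ← neg_one_pow_eq_pow_mod_two,
    pow_add]
  exact ((Commute.refl (-1 : R)).pow_pow _ _).eq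

lemma zeta_zero_eq_zeta_one {j : ℕ} (hj : j < 2 ^ σ n) : zeta σ n 0 j = zeta σ n 1 j := by
  simp [zeta, digit_of_lt_two_pow hj]

lemma gbfExp_two_pow_mul_add (hσ : MapsTo σ (Iio (n + 1)) (Iio (n + 1))) {r : ℕ}
    (hr : r < 2 ^ (n + 1)) (d t : ℕ) :
    gbfExp σ n d (2 ^ (n + 1) * t + r) =
      (1 - digit 1 t) * digit 0 t * zeta σ n d r + digit 1 t * (1 - digit 0 t) * eta σ n d r
        + (1 - d) * digit 1 t * digit 0 t := by
  have hlow : ∀ α ≤ n, digit (σ α) (2 ^ (n + 1) * t + r) = digit (σ α) r := fun α hα => by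
    rw [digit_two_pow_mul_add hr, if_pos (show σ α < n + 1 from hσ (by simp; omega))]
  simp only [gbfExp, zeta_congr hlow, eta_congr hlow, digit_two_pow_mul_add hr,
    if_neg (lt_irrefl _), if_neg (by omega : ¬n + 2 < n + 1), Nat.sub_self,
    show n + 2 - (n + 1) = 1 by omega]

theorem neg_one_pow_gbfExp_eq_czcpSeq (hσ : MapsTo σ (Iio (n + 1)) (Iio (n + 1))) {d k : ℕ}
    (hk : k < 2 * 2 ^ (n + 1) + 2) :
    (-1 : ℂ) ^ gbfExp σ n d (k + (2 ^ (n + 1) - 1)) =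
      czcpSeq (fun d j => (-1) ^ zeta σ n d j) (2 ^ (n + 1)) d k := by
  set N := 2 ^ (n + 1)
  have hN : 0 < N := by positivity
  rcases (by omega : k = 0 ∨ (1 ≤ k ∧ k ≤ N) ∨ (N < k ∧ k ≤ 2 * N) ∨ k = 2 * N + 1)
    with rfl | ⟨h1, h2⟩ | ⟨h1, h2⟩ | rfl
  · rw [czcpSeq_zero, show 0 + (N - 1) = N * 0 + (N - 1) by omega,
      gbfExp_two_pow_mul_add hσ (by omega)]
    simp [digit]
  · rw [czcpSeq_of_le h1 h2, show k + (N - 1) = N * 1 + (k - 1) by omega,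
      gbfExp_two_pow_mul_add hσ (by omega)]
    simp [digit]
  · have hexp : gbfExp σ n d (N * 2 + (k - N - 1)) = eta σ n d (k - N - 1) := by
      rw [gbfExp_two_pow_mul_add hσ (by omega)]
      simp [digit]
    rw [czcpSeq_of_lt h1 h2, show k + (N - 1) = N * 2 + (k - N - 1) by omega, hexp]
    refine neg_one_pow_eta fun α hα => ?_
    rw [show 2 * N - k = N - 1 - (k - N - 1) by omega]
    exact digit_two_pow_sub_one_sub (by omega) (hσ (by simp; omega))
  · rw [czcpSeq_last, show 2 * N + 1 + (N - 1) = N * 3 + 0 by omega,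
      gbfExp_two_pow_mul_add hσ hN]
    simp [digit]

theorem isGolayPair_neg_one_pow_zeta (hσ : BijOn σ (Iio (n + 1)) (Iio (n + 1))) :
    IsGolayPair (2 ^ (n + 1)) (fun j => (-1) ^ zeta σ n 0 j) (fun j => (-1) ^ zeta σ n 1 j) := by
  intro τ hτ
  rw [rhoC_eq_sum_of_conj_eq (by simp), rhoC_eq_sum_of_conj_eq (by simp),
    ← Finset.sum_add_distrib]
  simp only [neg_one_pow_zeta, Nat.cast_zero, zero_mul, add_zero, Nat.cast_one, one_mul]
  exact sum_neg_one_pow_pathForm_autocorr_eq_zero hσ hτ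

end BooleanFunctions

theorem stmt_3_general (q m : ℕ) (hq : 2 ≤ q) (hq2 : 2 ∣ q) (hm : 4 ≤ m)
    (σ : ℕ → ℕ) (hσ : Set.BijOn σ (Set.Iio (m - 2)) (Set.Iio (m - 2)))
    (c : ℕ)
    (bit : ℕ → ℕ → ℕ) (hbit : ∀ j i, bit j i = i / 2 ^ j % 2)
    (ζ η : ℕ → ℕ → ℕ)
    (hζ : ∀ d i, ζ d i =
      ((∑ α ∈ Finset.range (m - 3), bit (σ α) i * bit (σ (α + 1)) i)
        + d * bit (σ (m - 3)) i) % 2)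
    (hη : ∀ d i, η d i =
      ((∑ α ∈ Finset.range (m - 3), (1 - bit (σ α) i) * (1 - bit (σ (α + 1)) i))
        + (1 - d) * (1 - bit (σ (m - 3)) i) + d) % 2)
    (g : ℕ → ℕ → ℕ)
    (hg : ∀ d i, g d i =
      ((q / 2) * ((1 - bit (m - 1) i) * bit (m - 2) i * ζ d i
        + bit (m - 1) i * (1 - bit (m - 2) i) * η d i
        + (1 - d) * bit (m - 1) i * bit (m - 2) i) + c) % q)
    (ω : ℂ) (hω : ω = Complex.exp (2 * (Real.pi : ℂ) * Complex.I / (q : ℂ)))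
    (a b : ℕ → ℂ)
    (ha : ∀ k, a k = ω ^ g 0 (k + (2 ^ (m - 2) - 1)))
    (hb : ∀ k, b k = ω ^ g 1 (k + (2 ^ (m - 2) - 1))) :
    IsCZCP (2 ^ (m - 1) + 2) (2 ^ (σ (m - 3)) + 1) a b := by
  obtain ⟨n, rfl⟩ : ∃ n, m = n + 3 := ⟨m - 3, by omega⟩
  obtain rfl : bit = digit := funext₂ hbit
  obtain rfl : ζ = zeta σ n := funext₂ hζ
  obtain rfl : η = eta σ n := funext₂ hη
  replace hσ : BijOn σ (Iio (n + 1)) (Iio (n + 1)) := hσ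
  have hω' : IsPrimitiveRoot ω q := hω ▸ Complex.isPrimitiveRoot_exp q (by omega)
  have hseq (d k : ℕ) (hk : k < 2 * 2 ^ (n + 1) + 2) : ω ^ g d (k + (2 ^ (n + 1) - 1)) =
      czcpSeq (fun d j => (-1) ^ zeta σ n d j) (2 ^ (n + 1)) d k * ω ^ c := by
    have hgd : g d (k + (2 ^ (n + 1) - 1)) =
        (q / 2 * gbfExp σ n d (k + (2 ^ (n + 1) - 1)) + c) % q := hg _ _
    rw [hgd, hω'.pow_mod_half_mul_add (even_iff_two_dvd.2 hq2) (by omega),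
      neg_one_pow_gbfExp_eq_czcpSeq hσ.mapsTo hk]
  have hZ : 2 ^ σ n < 2 ^ (n + 1) := Nat.pow_lt_pow_right one_lt_two (hσ.mapsTo (by simp))
  have hpair := isCZCP_czcpSeq (S := fun d j => (-1 : ℂ) ^ zeta σ n d j)
    (isGolayPair_neg_one_pow_zeta hσ) (fun d j => by simp)
    (fun j hj => congrArg _ (zeta_zero_eq_zeta_one hj)) hZ
  have hωc : ‖ω ^ c‖ = 1 := by rw [norm_pow, hω'.norm'_eq_one (by omega), one_pow]
  show IsCZCP (2 ^ (n + 2) + 2) (2 ^ σ n + 1) a b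
  rw [pow_succ' 2 (n + 1)]
  exact (hpair.mul_right hωc).congr (fun k hk => (ha k).trans (hseq 0 k hk))
    (fun k hk => (hb k).trans (hseq 1 k hk))

/-- Theorem 1 of the paper: construction of
`(2^(m-1) + 2, 2^(σ(m-3)) + 1)`-CZCPs from generalized Boolean functions.
Here `q ≥ 2` is even, `σ` is a permutation of `{0, …, m-3}`, `c ∈ ℤ_q`,
`bit j i = i / 2^j % 2` is the `j`-th binary digit of `i`, the mod-2 valued functions
`ζ^d, η^d` and the mod-`q` valued generalized Boolean function `g^d` are as in the paper,
`ω = exp(2πi/q)`, and `a, b` are the truncations (removing the first and last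
`L = 2^(m-2) - 1` entries) of the length-`2^m` sequences `(ω^{g^0(i)})_i, (ω^{g^1(i)})_i`. -/
theorem stmt_3 (q m : ℕ) (hq : 2 ≤ q) (hq2 : 2 ∣ q) (hm : 4 ≤ m)
    (σ : ℕ → ℕ) (hσ : Set.BijOn σ (Set.Iio (m - 2)) (Set.Iio (m - 2)))
    (c : ℕ) (hc : c < q)
    (bit : ℕ → ℕ → ℕ) (hbit : ∀ j i, bit j i = i / 2 ^ j % 2)
    (ζ η : ℕ → ℕ → ℕ)
    (hζ : ∀ d i, ζ d i =
      ((∑ α ∈ Finset.range (m - 3), bit (σ α) i * bit (σ (α + 1)) i)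
        + d * bit (σ (m - 3)) i) % 2)
    (hη : ∀ d i, η d i =
      ((∑ α ∈ Finset.range (m - 3), (1 - bit (σ α) i) * (1 - bit (σ (α + 1)) i))
        + (1 - d) * (1 - bit (σ (m - 3)) i) + d) % 2)
    (g : ℕ → ℕ → ℕ)
    (hg : ∀ d i, g d i =
      ((q / 2) * ((1 - bit (m - 1) i) * bit (m - 2) i * ζ d i
        + bit (m - 1) i * (1 - bit (m - 2) i) * η d i
        + (1 - d) * bit (m - 1) i * bit (m - 2) i) + c) % q)
    (ω : ℂ) (hω : ω = Complex.exp (2 * (Real.pi : ℂ) * Complex.I / (q : ℂ)))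
    (a b : ℕ → ℂ)
    (ha : ∀ k, a k = ω ^ g 0 (k + (2 ^ (m - 2) - 1)))
    (hb : ∀ k, b k = ω ^ g 1 (k + (2 ^ (m - 2) - 1))) :
    IsCZCP (2 ^ (m - 1) + 2) (2 ^ (σ (m - 3)) + 1) a b :=
  stmt_3_general q m hq hq2 hm σ hσ c bit hbit ζ η hζ hη g hg ω hω a b ha hb
end

section
/- Let N be even and let (a,b) be a binary GCP of length N satisfying a_i = b_i for 0 ≤ i < N/2 and a_i = −b_i for N/2 ≤ i < N. Define c_i = b_{N−1−i}, d_i = −a_{N−1−i}, and the length-2N concatenations e = a||c, f = b||d. Let x_0, x_1, y_0, y_1 be complex numbers of modulus 1 satisfying x_0 − conj(y_1) = 0, x_1 + conj(y_0) = 0, x_0 = x_1, and conj(y_0) = −conj(y_1). Define the length-(2N+2) complex sequences g = (x_0, e_0, e_1, …, e_{2N−1}, y_0) and h = (x_1, f_0, f_1, …, f_{2N−1}, y_1). Then (g,h) is a (2N+2, N/2+1)-CZCP. -/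
/-- Aperiodic cross-correlation at shift `τ` of two length-`L` real sequences
(indexed `0, …, L-1`); it vanishes for `τ ≥ L`. -/
noncomputable def rhoR (L : ℕ) (u v : ℕ → ℝ) (τ : ℕ) : ℝ :=
  ∑ k ∈ Finset.range (L - τ), u k * v (k + τ)

/-- A binary sequence of length `L`: all entries in `{+1, -1}`. -/
def IsBinary (L : ℕ) (u : ℕ → ℝ) : Prop := ∀ i < L, u i = 1 ∨ u i = -1

/-- `(u, v)` is a binary Golay complementary pair (GCP) of length `L`:
both are binary and the autocorrelation sums vanish for `1 ≤ τ ≤ L - 1`. -/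
noncomputable def IsGCP (L : ℕ) (u v : ℕ → ℝ) : Prop :=
  IsBinary L u ∧ IsBinary L v ∧
    ∀ τ : ℕ, 1 ≤ τ → τ ≤ L - 1 → rhoR L u u τ + rhoR L v v τ = 0

/-- `(u, v)` (length-`L` real sequences) is an `(L, Z)`-CZCP:
(C1) the autocorrelation sums vanish for `τ ∈ {1,…,Z} ∪ {L-Z,…,L-1}`, and
(C2) the cross-correlation sums vanish for `τ ∈ {L-Z,…,L-1}`. -/
noncomputable def IsCZCPR (L Z : ℕ) (u v : ℕ → ℝ) : Prop :=
  (∀ τ : ℕ, ((1 ≤ τ ∧ τ ≤ Z) ∨ (L - Z ≤ τ ∧ τ ≤ L - 1)) →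
    rhoR L u u τ + rhoR L v v τ = 0) ∧
  (∀ τ : ℕ, (L - Z ≤ τ ∧ τ ≤ L - 1) → rhoR L u v τ + rhoR L v u τ = 0)

/-!
With `e = a ‖ rev b` and `f = b ‖ (-rev a)`, one has `ρ_e(τ) + ρ_f(τ) = 2 (ρ_a(τ) + ρ_b(τ))` at
every shift: for `τ ≤ N` each half of `e, f` reproduces one GCP sum, and the products straddling the
middle cancel in pairs under `m ↦ τ - 1 - m`; for `τ ≥ N` only straddling products remain and cancel
the same way. The constraints on `x₀, x₁, y₀, y₁` say that the pair is padded by `x, x` in front and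
`-x̄, x̄` at the back, so for `1 ≤ τ ≤ 2N` padding only adds `x` times a combination of
`e_{τ-1}, e_{2N-τ}, f_{τ-1}, f_{2N-τ}`. Since `e` read backwards is `b ‖ rev a` (and `f` backwards
is `-a ‖ rev b`) this combination vanishes for `τ ≤ N`, while for `τ` within `N/2 + 1` of the end
it, as well as the cross correlation of `e` and `f`, only involves the first `N/2` entries of
`a` and `b`, where they agree.
-/

open Finset ComplexConjugate

theorem rhoR_eq_zero_of_le {L τ : ℕ} {u v : ℕ → ℝ} (hτ : L ≤ τ) : rhoR L u v τ = 0 := by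
  simp [rhoR, Nat.sub_eq_zero_of_le hτ]

theorem IsGCP.rhoR_add_eq_zero {N τ : ℕ} {a b : ℕ → ℝ} (hab : IsGCP N a b) (hτ : 1 ≤ τ) :
    rhoR N a a τ + rhoR N b b τ = 0 := by
  rcases lt_or_ge τ N with hτN | hτN
  · exact hab.2.2 τ hτ (by omega)
  · simp [rhoR_eq_zero_of_le hτN]

theorem sum_range_mul_reflect {R : Type*} [CommSemiring R] (n : ℕ) (u v : ℕ → R) :
    ∑ k ∈ range n, u k * v (n - 1 - k) = ∑ k ∈ range n, v k * u (n - 1 - k) := by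
  rw [← sum_range_reflect]
  refine sum_congr rfl fun k hk => ?_
  rw [Nat.sub_sub_self (by simp at hk; omega), mul_comm]

/-- `u₀, …, u_{N-1}, v_{N-1}, …, v₀`. The paper's `e = a‖c` and `f = b‖d` are `appendRev N a b`
and `appendRev N b (-a)`. -/
def appendRev (N : ℕ) (u v : ℕ → ℝ) (i : ℕ) : ℝ :=
  if i < N then u i else v (N - 1 - (i - N))

section appendRev

variable {N τ i : ℕ} {u v u' v' : ℕ → ℝ}

theorem appendRev_of_lt (hi : i < N) : appendRev N u v i = u i := if_pos hi

theorem appendRev_of_le (hi : N ≤ i) : appendRev N u v i = v (2 * N - 1 - i) := by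
  rw [appendRev, if_neg (by omega)]
  congr 1
  omega

theorem appendRev_reflect (hi : i < 2 * N) :
    appendRev N u v (2 * N - 1 - i) = appendRev N v u i := by
  rcases lt_or_ge i N with h | h
  · rw [appendRev_of_le (by omega), appendRev_of_lt h, Nat.sub_sub_self (by omega)]
  · rw [appendRev_of_lt (by omega), appendRev_of_le h]

theorem rhoR_appendRev_of_le (hτ : τ ≤ N) :
    rhoR (2 * N) (appendRev N u v) (appendRev N u' v') τ =
      rhoR N u u' τ + rhoR N v' v τ +
        -- `N - τ + (τ - 1 - m) = N - 1 - m`, written so that `sum_range_mul_reflect` applies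
        ∑ m ∈ range τ, u (N - τ + m) * v' (N - τ + (τ - 1 - m)) := by
  rw [rhoR, show 2 * N - τ = (N - τ) + τ + (N - τ) by omega, sum_range_add, sum_range_add,
    add_right_comm]
  congr 1
  congr 1
  · refine sum_congr rfl fun k hk => ?_
    simp only [mem_range] at hk
    rw [appendRev_of_lt (by omega), appendRev_of_lt (by omega)]
  · rw [rhoR, ← sum_range_reflect]
    refine sum_congr rfl fun k hk => ?_
    simp only [mem_range] at hk
    rw [appendRev_of_le (by omega), appendRev_of_le (by omega), mul_comm]
    congr 2 <;> omega
  · refine sum_congr rfl fun m hm => ?_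
    simp only [mem_range] at hm
    rw [appendRev_of_lt (by omega), appendRev_of_le (by omega)]
    congr 2
    omega

theorem rhoR_appendRev_of_ge (hτ : N ≤ τ) :
    rhoR (2 * N) (appendRev N u v) (appendRev N u' v') τ =
      ∑ k ∈ range (2 * N - τ), u k * v' (2 * N - τ - 1 - k) := by
  refine sum_congr rfl fun k hk => ?_
  simp only [mem_range] at hk
  rw [appendRev_of_lt (by omega), appendRev_of_le (by omega)]
  congr 2
  omega

theorem rhoR_appendRev_add (a b : ℕ → ℝ) (τ : ℕ) :
    rhoR (2 * N) (appendRev N a b) (appendRev N a b) τ +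
        rhoR (2 * N) (appendRev N b (-a)) (appendRev N b (-a)) τ =
      2 * (rhoR N a a τ + rhoR N b b τ) := by
  have hneg : rhoR N (-a) (-a) τ = rhoR N a a τ := by
    simp only [rhoR, Pi.neg_apply, neg_mul_neg]
  rcases le_total τ N with hτ | hτ
  · rw [rhoR_appendRev_of_le hτ, rhoR_appendRev_of_le hτ, hneg,
      sum_range_mul_reflect τ (fun m => a (N - τ + m)) (fun m => b (N - τ + m))]
    simp only [Pi.neg_apply, mul_neg, sum_neg_distrib]
    ring
  · rw [rhoR_appendRev_of_ge hτ, rhoR_appendRev_of_ge hτ, rhoR_eq_zero_of_le hτ,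
      rhoR_eq_zero_of_le hτ, sum_range_mul_reflect (2 * N - τ) a]
    simp only [Pi.neg_apply, mul_neg, sum_neg_distrib]
    ring

theorem rhoR_appendRev_cross_add_eq_zero {a b : ℕ → ℝ} (hτ : N ≤ τ)
    (hsym : ∀ i, i + τ < 2 * N → a i = b i) :
    rhoR (2 * N) (appendRev N a b) (appendRev N b (-a)) τ +
      rhoR (2 * N) (appendRev N b (-a)) (appendRev N a b) τ = 0 := by
  rw [rhoR_appendRev_of_ge hτ, rhoR_appendRev_of_ge hτ, ← sum_add_distrib]
  refine sum_eq_zero fun k hk => ?_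
  simp only [mem_range] at hk
  rw [Pi.neg_apply, hsym k (by omega), hsym (2 * N - τ - 1 - k) (by omega)]
  ring

end appendRev

def padEnds (M : ℕ) (p : ℂ) (u : ℕ → ℝ) (q : ℂ) (i : ℕ) : ℂ :=
  if i = 0 then p else if i ≤ M then (u (i - 1) : ℂ) else q

section padEnds

variable {M τ : ℕ} {p p' q q' : ℂ} {u v : ℕ → ℝ}

@[simp]
theorem padEnds_zero : padEnds M p u q 0 = p := if_pos rfl

theorem padEnds_succ {i : ℕ} (hi : i < M) : padEnds M p u q (i + 1) = u i := by
  simp [padEnds, Nat.succ_le_of_lt hi]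

theorem padEnds_of_lt {i : ℕ} (hi : M < i) : padEnds M p u q i = q := by
  rw [padEnds, if_neg (by omega), if_neg (by omega)]

theorem rhoC_padEnds_of_le (hτ1 : 1 ≤ τ) (hτ : τ ≤ M) :
    rhoC (M + 2) (padEnds M p u q) (padEnds M p' v q') τ =
      p * v (τ - 1) + rhoR M u v τ + u (M - τ) * conj q' := by
  have hfirst : padEnds M p' v q' τ = v (τ - 1) := by
    simpa [Nat.sub_add_cancel hτ1] using padEnds_succ (p := p') (u := v) (q := q') (i := τ - 1)
      (by omega)
  rw [rhoC, show M + 2 - τ = (M - τ) + 1 + 1 by omega, sum_range_succ, sum_range_succ',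
    zero_add, padEnds_zero, hfirst, Complex.conj_ofReal, padEnds_succ (by omega),
    padEnds_of_lt (i := M - τ + 1 + τ) (by omega), rhoR]
  push_cast
  rw [add_comm (∑ k ∈ range (M - τ), _)]
  congr 2
  refine sum_congr rfl fun k hk => ?_
  simp only [mem_range] at hk
  rw [show k + 1 + τ = (k + τ) + 1 by omega, padEnds_succ (by omega), padEnds_succ (by omega),
    Complex.conj_ofReal]

theorem rhoC_padEnds_last :
    rhoC (M + 2) (padEnds M p u q) (padEnds M p' v q') (M + 1) = p * conj q' := by
  rw [rhoC, show M + 2 - (M + 1) = 1 by omega, sum_range_one, padEnds_zero, zero_add,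
    padEnds_of_lt (by omega)]

end padEnds

section padEndsAppendRev

variable {N τ : ℕ}

theorem rhoC_padEnds_appendRev_add_eq_zero {a b : ℕ → ℝ} (hab : IsGCP N a b) (x : ℂ)
    (hτ1 : 1 ≤ τ) (hτ : τ ≤ 2 * N + 1) (hsym : N < τ → ∀ i, i + τ ≤ 2 * N → a i = b i) :
    rhoC (2 * N + 2) (padEnds (2 * N) x (appendRev N a b) (-conj x))
        (padEnds (2 * N) x (appendRev N a b) (-conj x)) τ +
      rhoC (2 * N + 2) (padEnds (2 * N) x (appendRev N b (-a)) (conj x))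
        (padEnds (2 * N) x (appendRev N b (-a)) (conj x)) τ = 0 := by
  obtain rfl | hτ := eq_or_lt_of_le hτ
  · simp only [rhoC_padEnds_last, map_neg, Complex.conj_conj]
    ring
  have hends : appendRev N a b (τ - 1) - appendRev N a b (2 * N - τ) +
      appendRev N b (-a) (τ - 1) + appendRev N b (-a) (2 * N - τ) = 0 := by
    rw [show 2 * N - τ = 2 * N - 1 - (τ - 1) by omega, appendRev_reflect (by omega),
      appendRev_reflect (by omega)]
    rcases lt_or_ge (τ - 1) N with h | h
    · simp only [appendRev_of_lt h, Pi.neg_apply]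
      ring
    · simp only [appendRev_of_le h, Pi.neg_apply]
      rw [hsym (by omega) (2 * N - 1 - (τ - 1)) (by omega)]
      ring
  have hmid := rhoR_appendRev_add (N := N) a b τ
  rw [hab.rhoR_add_eq_zero hτ1, mul_zero] at hmid
  rw [rhoC_padEnds_of_le hτ1 (by omega), rhoC_padEnds_of_le hτ1 (by omega)]
  simp only [map_neg, Complex.conj_conj]
  linear_combination (norm := (push_cast; ring))
    x * congrArg Complex.ofReal hends + congrArg Complex.ofReal hmid

theorem rhoC_padEnds_appendRev_cross_add_eq_zero {a b : ℕ → ℝ} (x : ℂ) (hτN : N < τ)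
    (hτ : τ ≤ 2 * N + 1) (hsym : ∀ i, i + τ < 2 * N → a i = b i) :
    rhoC (2 * N + 2) (padEnds (2 * N) x (appendRev N a b) (-conj x))
        (padEnds (2 * N) x (appendRev N b (-a)) (conj x)) τ +
      rhoC (2 * N + 2) (padEnds (2 * N) x (appendRev N b (-a)) (conj x))
        (padEnds (2 * N) x (appendRev N a b) (-conj x)) τ = 0 := by
  obtain rfl | hτ := eq_or_lt_of_le hτ
  · simp only [rhoC_padEnds_last, map_neg, Complex.conj_conj]
    ring
  have hends : appendRev N b (-a) (τ - 1) + appendRev N a b (2 * N - τ) +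
      appendRev N a b (τ - 1) - appendRev N b (-a) (2 * N - τ) = 0 := by
    simp only [appendRev_of_le (show N ≤ τ - 1 by omega),
      appendRev_of_lt (show 2 * N - τ < N by omega), show 2 * N - 1 - (τ - 1) = 2 * N - τ by omega,
      Pi.neg_apply]
    ring
  have hmid := rhoR_appendRev_cross_add_eq_zero hτN.le hsym
  rw [rhoC_padEnds_of_le (by omega) (by omega), rhoC_padEnds_of_le (by omega) (by omega)]
  simp only [map_neg, Complex.conj_conj]
  linear_combination (norm := (push_cast; ring))
    x * congrArg Complex.ofReal hends + congrArg Complex.ofReal hmid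

end padEndsAppendRev

theorem stmt_6_general (N : ℕ) (a b : ℕ → ℝ) (hab : IsGCP N a b)
    (h1 : ∀ i < N / 2, a i = b i)
    (e f : ℕ → ℝ)
    (he : ∀ i, e i = if i < N then a i else b (N - 1 - (i - N)))
    (hf : ∀ i, f i = if i < N then b i else -a (N - 1 - (i - N)))
    (x0 x1 y0 y1 : ℂ)
    (cc1 : x0 - (starRingEnd ℂ) y1 = 0) (cc2 : x1 + (starRingEnd ℂ) y0 = 0)
    (cc3 : x0 = x1)
    (g h : ℕ → ℂ)
    (hg : ∀ i, g i = if i = 0 then x0 else if i ≤ 2 * N then ((e (i - 1) : ℝ) : ℂ) else y0)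
    (hh : ∀ i, h i = if i = 0 then x1 else if i ≤ 2 * N then ((f (i - 1) : ℝ) : ℂ) else y1) :
    IsCZCP (2 * N + 2) (N / 2 + 1) g h := by
  subst cc3
  obtain rfl : y1 = conj x0 := by rw [sub_eq_zero.mp cc1, Complex.conj_conj]
  obtain rfl : y0 = -conj x0 := by
    rw [← Complex.conj_conj y0, show conj y0 = -x0 by linear_combination cc2, map_neg]
  obtain rfl : e = appendRev N a b := funext he
  obtain rfl : f = appendRev N b (-a) := funext hf
  obtain rfl : g = padEnds (2 * N) x0 (appendRev N a b) (-conj x0) := funext hg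
  obtain rfl : h = padEnds (2 * N) x0 (appendRev N b (-a)) (conj x0) := funext hh
  refine ⟨fun τ hτ => ?_, fun τ hτ => ?_⟩
  · exact rhoC_padEnds_appendRev_add_eq_zero hab x0 (by omega) (by omega)
      fun _ i hi => h1 i (by omega)
  · exact rhoC_padEnds_appendRev_cross_add_eq_zero x0 (by omega) (by omega)
      fun i hi => h1 i (by omega)

/-- Theorem 2 of the paper: Let `N` be even and `(a, b)` a binary GCP of
length `N` with `a_i = b_i` for `i < N/2` and `a_i = -b_i` for `N/2 ≤ i < N`.  Put
`c_i = b_{N-1-i}`, `d_i = -a_{N-1-i}`, `e = a‖c`, `f = b‖d` (length `2N`).  Let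
`x₀, x₁, y₀, y₁` be unimodular complex numbers with `x₀ - conj y₁ = 0`,
`x₁ + conj y₀ = 0`, `x₀ = x₁` and `conj y₀ = -conj y₁`.  Then the length-`(2N+2)`
sequences `g = (x₀, e₀, …, e_{2N-1}, y₀)` and `h = (x₁, f₀, …, f_{2N-1}, y₁)` form a
`(2N+2, N/2+1)`-CZCP. -/
theorem stmt_6 (N : ℕ) (hN2 : 2 ∣ N) (hN : 0 < N) (a b : ℕ → ℝ) (hab : IsGCP N a b)
    (h1 : ∀ i < N / 2, a i = b i) (h2 : ∀ i, N / 2 ≤ i → i < N → a i = -b i)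
    (e f : ℕ → ℝ)
    (he : ∀ i, e i = if i < N then a i else b (N - 1 - (i - N)))
    (hf : ∀ i, f i = if i < N then b i else -a (N - 1 - (i - N)))
    (x0 x1 y0 y1 : ℂ)
    (hx0 : ‖x0‖ = 1) (hx1 : ‖x1‖ = 1)
    (hy0 : ‖y0‖ = 1) (hy1 : ‖y1‖ = 1)
    (cc1 : x0 - (starRingEnd ℂ) y1 = 0) (cc2 : x1 + (starRingEnd ℂ) y0 = 0)
    (cc3 : x0 = x1) (cc4 : (starRingEnd ℂ) y0 = -(starRingEnd ℂ) y1)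
    (g h : ℕ → ℂ)
    (hg : ∀ i, g i = if i = 0 then x0 else if i ≤ 2 * N then ((e (i - 1) : ℝ) : ℂ) else y0)
    (hh : ∀ i, h i = if i = 0 then x1 else if i ≤ 2 * N then ((f (i - 1) : ℝ) : ℂ) else y1) :
    IsCZCP (2 * N + 2) (N / 2 + 1) g h :=
  stmt_6_general N a b hab h1 e f he hf x0 x1 y0 y1 cc1 cc2 cc3 g h hg hh
end

section
/- Let β ≥ 1 and let (a,b) be the binary pair of length N = 10^β defined recursively by (a^{(1)},b^{(1)}) = K_{10} and (a^{(j+1)},b^{(j+1)}) = Turyn(K_{10}, (a^{(j)},b^{(j)})) for 1 ≤ j < β, with (a,b) = (a^{(β)},b^{(β)}). Define c_i = b_{N−1−i}, d_i = −a_{N−1−i}, e = a||c, f = b||d (length 2N). Let x_0, x_1, y_0, y_1 be complex numbers of modulus 1 satisfying x_0 − conj(y_1) = 0, x_1 + conj(y_0) = 0, x_0 = x_1, and conj(y_0) = −conj(y_1). Define g = (x_0, e_0, …, e_{2N−1}, y_0) and h = (x_1, f_0, …, f_{2N−1}, y_1) of length 2N+2. Then (g,h) is a (2N+2, 4N/10+1)-CZCP.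 -/
/-- First sequence of the length-10 Golay kernel `K₁₀`: `(+,+,-,+,-,+,-,-,+,+)`. -/
noncomputable def K10a : ℕ → ℝ := fun i =>
  (([1, 1, -1, 1, -1, 1, -1, -1, 1, 1] : List ℝ).getD i 0)

/-- Second sequence of the length-10 Golay kernel `K₁₀`: `(+,+,-,+,+,+,+,+,-,-)`. -/
noncomputable def K10b : ℕ → ℝ := fun i =>
  (([1, 1, -1, 1, 1, 1, 1, 1, -1, -1] : List ℝ).getD i 0)

/-- First sequence of the length-26 Golay kernel `K₂₆`. -/
noncomputable def K26a : ℕ → ℝ := fun i =>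
  (([1, 1, 1, 1, -1, 1, 1, -1, -1, 1, -1, 1, -1, 1, -1, -1, 1, -1, 1, 1, 1, -1, -1, 1, 1, 1] :
    List ℝ).getD i 0)

/-- Second sequence of the length-26 Golay kernel `K₂₆`. -/
noncomputable def K26b : ℕ → ℝ := fun i =>
  (([1, 1, 1, 1, -1, 1, 1, -1, -1, 1, -1, 1, 1, 1, 1, 1, -1, 1, -1, -1, -1, 1, 1, -1, -1, -1] :
    List ℝ).getD i 0)

/-- Turyn's construction: given `(p, q)` of length `M` and `(c, d)` of length `K`, the
resulting pair `(e, f)` of length `K·M` is given (at index `kM + j`, i.e. `k = i / M`,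
`j = i % M`) by `e_{kM+j} = c_k (p_j + q_j)/2 - d_{K-1-k} (q_j - p_j)/2` and
`f_{kM+j} = d_k (p_j + q_j)/2 + c_{K-1-k} (q_j - p_j)/2`. -/
noncomputable def turynPair (M K : ℕ) (p q c d : ℕ → ℝ) : (ℕ → ℝ) × (ℕ → ℝ) :=
  (fun i => c (i / M) * (p (i % M) + q (i % M)) / 2
      - d (K - 1 - i / M) * (q (i % M) - p (i % M)) / 2,
   fun i => d (i / M) * (p (i % M) + q (i % M)) / 2
      + c (K - 1 - i / M) * (q (i % M) - p (i % M)) / 2)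

def zeroPad (L : ℕ) (u : ℕ → ℝ) : ℕ → ℝ := fun i => if i < L then u i else 0

def rev (L : ℕ) (u : ℕ → ℝ) : ℕ → ℝ := fun i => u (L - 1 - i)

def kron (M : ℕ) (u w : ℕ → ℝ) : ℕ → ℝ := fun i => u (i / M) * w (i % M)

/-- `IsGCP` without the binarity condition. -/
def IsComplementaryPair (L : ℕ) (u v : ℕ → ℝ) : Prop :=
  ∀ τ, 1 ≤ τ → rhoR L u u τ + rhoR L v v τ = 0

section Correlation

variable {L : ℕ} {u u' v v' : ℕ → ℝ} {τ : ℕ}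

lemma rhoR_add_left : rhoR L (u + u') v τ = rhoR L u v τ + rhoR L u' v τ := by
  simp only [rhoR, Pi.add_apply, add_mul, Finset.sum_add_distrib]

lemma rhoR_sub_left : rhoR L (u - u') v τ = rhoR L u v τ - rhoR L u' v τ := by
  simp only [rhoR, Pi.sub_apply, sub_mul, Finset.sum_sub_distrib]

lemma rhoR_add_right : rhoR L u (v + v') τ = rhoR L u v τ + rhoR L u v' τ := by
  simp only [rhoR, Pi.add_apply, mul_add, Finset.sum_add_distrib]

lemma rhoR_sub_right : rhoR L u (v - v') τ = rhoR L u v τ - rhoR L u v' τ := by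
  simp only [rhoR, Pi.sub_apply, mul_sub, Finset.sum_sub_distrib]

lemma rhoR_eq_sum_zeroPad : rhoR L u v τ = ∑ i ∈ Finset.range L, u i * zeroPad L v (i + τ) := by
  rw [rhoR, ← Finset.sum_range_add_sum_Ico _ (Nat.sub_le L τ),
    Finset.sum_eq_zero (s := Finset.Ico _ _), add_zero]
  · refine Finset.sum_congr rfl fun i hi => ?_
    rw [zeroPad, if_pos (by rw [Finset.mem_range] at hi; omega)]
  · intro i hi
    rw [zeroPad, if_neg (by rw [Finset.mem_Ico] at hi; omega), mul_zero]

lemma rhoR_rev_rev : rhoR L (rev L u) (rev L v) τ = rhoR L v u τ := by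
  rw [rhoR, ← Finset.sum_range_reflect]
  refine Finset.sum_congr rfl fun k hk => ?_
  rw [Finset.mem_range] at hk
  simp only [rev]
  rw [show L - 1 - (L - τ - 1 - k) = k + τ by omega, show L - 1 - (L - τ - 1 - k + τ) = k by omega,
    mul_comm]

lemma rhoR_comm_rev_right : rhoR L u (rev L v) τ = rhoR L v (rev L u) τ := by
  rw [rhoR, ← Finset.sum_range_reflect]
  refine Finset.sum_congr rfl fun k hk => ?_
  rw [Finset.mem_range] at hk
  simp only [rev]
  rw [show L - 1 - (L - τ - 1 - k + τ) = k by omega, show L - 1 - (k + τ) = L - τ - 1 - k by omega,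
    mul_comm]

lemma rhoR_comm_rev_left : rhoR L (rev L u) v τ = rhoR L (rev L v) u τ := by
  rw [rhoR, ← Finset.sum_range_reflect]
  refine Finset.sum_congr rfl fun k hk => ?_
  rw [Finset.mem_range] at hk
  simp only [rev]
  rw [show L - 1 - (L - τ - 1 - k) = k + τ by omega, show L - τ - 1 - k + τ = L - 1 - k by omega,
    mul_comm]

end Correlation

section Kronecker

variable {K M : ℕ} {u u' w w' : ℕ → ℝ}

lemma sum_range_mul_eq_sum_sum (F : ℕ → ℝ) :
    ∑ i ∈ Finset.range (K * M), F i
      = ∑ k ∈ Finset.range K, ∑ j ∈ Finset.range M, F (M * k + j) := by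
  induction K with
  | zero => simp
  | succ K ih => rw [Nat.succ_mul, Finset.sum_range_add, ih, Finset.sum_range_succ, mul_comm]

lemma kron_mul_add {k j : ℕ} (hj : j < M) : kron M u w (M * k + j) = u k * w j := by
  rw [kron, Nat.mul_add_div (by omega), Nat.div_eq_of_lt hj, add_zero, Nat.mul_add_mod,
    Nat.mod_eq_of_lt hj]

lemma zeroPad_kron_mul_add {k j : ℕ} (hj : j < M) :
    zeroPad (K * M) (kron M u w) (M * k + j) = zeroPad K u k * w j := by
  have hlt : M * k + j < K * M ↔ k < K := by
    rw [← Nat.div_lt_iff_lt_mul (by omega), Nat.mul_add_div (by omega), Nat.div_eq_of_lt hj,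
      add_zero]
  by_cases hk : k < K
  · rw [zeroPad, zeroPad, if_pos (hlt.2 hk), if_pos hk, kron_mul_add hj]
  · rw [zeroPad, zeroPad, if_neg (mt hlt.1 hk), if_neg hk, zero_mul]

/-- The shift-`(n + 1)` term collects the last `v` entries of each block, which reach into the next
block. -/
lemma rhoR_kron {n v : ℕ} (hv : v < M) :
    rhoR (K * M) (kron M u w) (kron M u' w') (M * n + v)
      = rhoR K u u' n * rhoR M w w' v + rhoR K u u' (n + 1) * rhoR M w' w (M - v) := by
  have hblock : ∀ k, ∑ j ∈ Finset.range M,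
      kron M u w (M * k + j) * zeroPad (K * M) (kron M u' w') (M * k + j + (M * n + v))
        = u k * zeroPad K u' (k + n) * rhoR M w w' v
          + u k * zeroPad K u' (k + (n + 1)) * rhoR M w' w (M - v) := by
    intro k
    rw [← Nat.sub_add_cancel hv.le, Finset.sum_range_add, Nat.sub_add_cancel hv.le, rhoR, rhoR,
      Nat.sub_sub_self hv.le, Finset.mul_sum, Finset.mul_sum]
    congr 1
    · refine Finset.sum_congr rfl fun j hj => ?_
      rw [Finset.mem_range] at hj
      rw [show M * k + j + (M * n + v) = M * (k + n) + (j + v) by ring, kron_mul_add (by omega),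
        zeroPad_kron_mul_add (by omega)]
      ring
    · refine Finset.sum_congr rfl fun j hj => ?_
      rw [Finset.mem_range] at hj
      rw [show M * k + (M - v + j) + (M * n + v) = M * (k + (n + 1)) + j by
          rw [Nat.mul_add M k, Nat.mul_add M n, ← Nat.sub_add_cancel hv.le]; ring_nf; omega,
        kron_mul_add (by omega), zeroPad_kron_mul_add (by omega), add_comm j]
      ring
  rw [rhoR_eq_sum_zeroPad, sum_range_mul_eq_sum_sum, Finset.sum_congr rfl fun k _ => hblock k,
    Finset.sum_add_distrib, ← Finset.sum_mul, ← Finset.sum_mul, rhoR_eq_sum_zeroPad (L := K),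
    rhoR_eq_sum_zeroPad (L := K)]

end Kronecker

noncomputable def halfSum (p q : ℕ → ℝ) : ℕ → ℝ := fun j => (p j + q j) / 2

noncomputable def halfDiff (p q : ℕ → ℝ) : ℕ → ℝ := fun j => (q j - p j) / 2

lemma turynPair_eq_kron (M K : ℕ) (p q c d : ℕ → ℝ) :
    turynPair M K p q c d =
      (kron M c (halfSum p q) - kron M (rev K d) (halfDiff p q),
       kron M d (halfSum p q) + kron M (rev K c) (halfDiff p q)) := by
  ext i <;> simp only [turynPair, kron, rev, halfSum, halfDiff, Pi.sub_apply, Pi.add_apply] <;> ring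

lemma rhoR_halfSum_add_rhoR_halfDiff (M : ℕ) (p q : ℕ → ℝ) (v : ℕ) :
    rhoR M (halfSum p q) (halfSum p q) v + rhoR M (halfDiff p q) (halfDiff p q) v
      = (rhoR M p p v + rhoR M q q v) / 2 := by
  simp only [rhoR, halfSum, halfDiff, ← Finset.sum_add_distrib, Finset.sum_div]
  exact Finset.sum_congr rfl fun j _ => by ring

theorem IsComplementaryPair.turynPair {M K : ℕ} {p q c d : ℕ → ℝ}
    (hpq : IsComplementaryPair M p q) (hcd : IsComplementaryPair K c d) :
    IsComplementaryPair (K * M) (turynPair M K p q c d).1 (turynPair M K p q c d).2 := by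
  intro τ hτ
  rcases Nat.eq_zero_or_pos M with rfl | hM
  · simp [rhoR]
  obtain ⟨n, v, hv, rfl⟩ : ∃ n v, v < M ∧ τ = M * n + v :=
    ⟨τ / M, τ % M, Nat.mod_lt τ hM, (Nat.div_add_mod τ M).symm⟩
  rw [turynPair_eq_kron]
  simp only [rhoR_add_left, rhoR_sub_left, rhoR_add_right, rhoR_sub_right, rhoR_kron hv,
    rhoR_rev_rev, rhoR_comm_rev_right (u := c) (v := d), rhoR_comm_rev_left (u := d) (v := c)]
  set s := halfSum p q
  set t := halfDiff p q
  have hnext := hcd (n + 1) (by omega)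
  rcases Nat.eq_zero_or_pos v with rfl | hv0
  · have hcur := hcd n (Nat.one_le_iff_ne_zero.2 (by rintro rfl; simp at hτ))
    linear_combination (rhoR M s s 0 + rhoR M t t 0) * hcur
      + (rhoR M s s M + rhoR M t t M) * hnext
  · have hst : rhoR M s s v + rhoR M t t v = 0 := by
      rw [rhoR_halfSum_add_rhoR_halfDiff, hpq v hv0, zero_div]
    linear_combination (rhoR K c c n + rhoR K d d n) * hst
      + (rhoR M s s (M - v) + rhoR M t t (M - v)) * hnext

def EqOnHeadNegOnTail (L r : ℕ) (u v : ℕ → ℝ) : Prop :=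
  (∀ i < r, u i = v i) ∧ ∀ i, L - r ≤ i → i < L → u i = -v i

theorem EqOnHeadNegOnTail.turynPair {M K r : ℕ} {c d : ℕ → ℝ} (p q : ℕ → ℝ) (hrK : r ≤ K)
    (hcd : EqOnHeadNegOnTail K r c d) :
    EqOnHeadNegOnTail (K * M) (r * M) (turynPair M K p q c d).1 (turynPair M K p q c d).2 := by
  rcases Nat.eq_zero_or_pos M with rfl | hM
  · simp [EqOnHeadNegOnTail]
  refine ⟨fun i hi => ?_, fun i hi₁ hi₂ => ?_⟩
  · have hk : i / M < r := (Nat.div_lt_iff_lt_mul hM).2 hi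
    simp only [_root_.turynPair]
    generalize i / M = k at hk ⊢
    rw [hcd.1 k hk, hcd.2 (K - 1 - k) (by omega) (by omega)]
    ring
  · have hk₁ : K - r ≤ i / M := (Nat.le_div_iff_mul_le hM).2 (by rwa [Nat.sub_mul])
    have hk₂ : i / M < K := (Nat.div_lt_iff_lt_mul hM).2 hi₂
    simp only [_root_.turynPair]
    generalize i / M = k at hk₁ hk₂ ⊢
    rw [hcd.2 k hk₁ hk₂, hcd.1 (K - 1 - k) (by omega)]
    ring

theorem iterate_turynPair {M r β : ℕ} {p q : ℕ → ℝ} (hpq : IsComplementaryPair M p q)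
    (hsigns : EqOnHeadNegOnTail M r p q) (hrM : r ≤ M) (P : ℕ → (ℕ → ℝ) × (ℕ → ℝ))
    (hP1 : P 1 = (p, q))
    (hPrec : ∀ j, 1 ≤ j → j < β → P (j + 1) = turynPair M (M ^ j) p q (P j).1 (P j).2)
    (hβ : 1 ≤ β) :
    IsComplementaryPair (M ^ β) (P β).1 (P β).2 ∧
      EqOnHeadNegOnTail (M ^ β) (r * M ^ (β - 1)) (P β).1 (P β).2 := by
  induction β, hβ using Nat.le_induction with
  | base => simpa [hP1] using ⟨hpq, hsigns⟩
  | succ n hn ih =>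
    obtain ⟨hcompl, hsigns'⟩ := ih fun j hj₁ hj₂ => hPrec j hj₁ (by omega)
    have hlen : r * M ^ (n - 1) ≤ M ^ n := by
      calc r * M ^ (n - 1) ≤ M * M ^ (n - 1) := Nat.mul_le_mul_right _ hrM
        _ = M ^ n := by rw [← pow_succ', Nat.sub_add_cancel hn]
    rw [hPrec n hn (by omega), pow_succ, Nat.add_sub_cancel, show r * M ^ n = r * M ^ (n - 1) * M by
      rw [mul_assoc, ← pow_succ, Nat.sub_add_cancel hn]]
    exact ⟨hpq.turynPair hcompl, hsigns'.turynPair p q hlen⟩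

lemma isComplementaryPair_K10 : IsComplementaryPair 10 K10a K10b := by
  intro τ hτ
  rcases lt_or_ge τ 10 with hτ10 | hτ10
  · interval_cases τ <;> norm_num [rhoR, Finset.sum_range_succ, K10a, K10b]
  · simp [rhoR, Nat.sub_eq_zero_of_le hτ10]

lemma eqOnHeadNegOnTail_K10 : EqOnHeadNegOnTail 10 4 K10a K10b := by
  refine ⟨fun i hi => ?_, fun i hi₁ hi₂ => ?_⟩ <;> interval_cases i <;> norm_num [K10a, K10b]

lemma Finset.sum_range_eq_zero_of_reflect_neg {n : ℕ} {F : ℕ → ℝ}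
    (hF : ∀ k < n, F (n - 1 - k) = -F k) : ∑ k ∈ Finset.range n, F k = 0 := by
  have h := Finset.sum_range_reflect F n
  rw [Finset.sum_congr rfl fun k hk => hF k (Finset.mem_range.1 hk), Finset.sum_neg_distrib] at h
  linarith

def appendReverse (N : ℕ) (a b : ℕ → ℝ) : ℕ → ℝ :=
  fun i => if i < N then a i else b (N - 1 - (i - N))

section AppendReverse

variable {N : ℕ} {a b : ℕ → ℝ}

lemma appendReverse_of_lt {i : ℕ} (hi : i < N) : appendReverse N a b i = a i := if_pos hi

lemma appendReverse_of_le {i : ℕ} (hi : N ≤ i) : appendReverse N a b i = b (2 * N - 1 - i) := by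
  rw [appendReverse, if_neg (by omega), show N - 1 - (i - N) = 2 * N - 1 - i by omega]

/-- The two halves each contribute `ρ_a + ρ_b`, and the products straddling the junction cancel in
pairs under reflection. -/
theorem IsComplementaryPair.appendReverse (hab : IsComplementaryPair N a b) :
    IsComplementaryPair (2 * N) (appendReverse N a b) (appendReverse N b (-a)) := by
  intro τ hτ
  set F : ℕ → ℝ := fun k => _root_.appendReverse N a b k * _root_.appendReverse N a b (k + τ)
    + _root_.appendReverse N b (-a) k * _root_.appendReverse N b (-a) (k + τ) with hF
  have hhead : ∑ k ∈ Finset.range (N - τ), F k = rhoR N a a τ + rhoR N b b τ := by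
    rw [rhoR, rhoR, ← Finset.sum_add_distrib]
    refine Finset.sum_congr rfl fun k hk => ?_
    rw [Finset.mem_range] at hk
    simp only [hF, appendReverse_of_lt (show k < N by omega),
      appendReverse_of_lt (show k + τ < N by omega)]
  have htail : ∑ k ∈ Finset.range (N - τ), F (N - τ + min τ (2 * N - τ) + k)
      = rhoR N a a τ + rhoR N b b τ := by
    rw [rhoR, rhoR, ← Finset.sum_add_distrib, ← Finset.sum_range_reflect]
    refine Finset.sum_congr rfl fun k hk => ?_
    rw [Finset.mem_range] at hk
    have hidx : N - τ + min τ (2 * N - τ) + (N - τ - 1 - k) = 2 * N - 1 - (k + τ) := by omega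
    simp only [hF, hidx, appendReverse_of_le (show N ≤ 2 * N - 1 - (k + τ) by omega),
      appendReverse_of_le (show N ≤ 2 * N - 1 - (k + τ) + τ by omega),
      show 2 * N - 1 - (2 * N - 1 - (k + τ)) = k + τ by omega,
      show 2 * N - 1 - (2 * N - 1 - (k + τ) + τ) = k by omega, Pi.neg_apply]
    ring
  have hjunction : ∑ k ∈ Finset.range (min τ (2 * N - τ)), F (N - τ + k) = 0 := by
    refine Finset.sum_range_eq_zero_of_reflect_neg fun k hk => ?_
    set k' := min τ (2 * N - τ) - 1 - k
    simp only [hF, appendReverse_of_lt (show N - τ + k < N by omega),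
      appendReverse_of_lt (show N - τ + k' < N by omega),
      appendReverse_of_le (show N ≤ N - τ + k + τ by omega),
      appendReverse_of_le (show N ≤ N - τ + k' + τ by omega),
      show 2 * N - 1 - (N - τ + k + τ) = N - τ + k' by omega,
      show 2 * N - 1 - (N - τ + k' + τ) = N - τ + k by omega, Pi.neg_apply]
    ring
  suffices h : ∑ k ∈ Finset.range (2 * N - τ), F k = 0 by
    rwa [rhoR, rhoR, ← Finset.sum_add_distrib]
  rw [show 2 * N - τ = (N - τ) + min τ (2 * N - τ) + (N - τ) by omega, Finset.sum_range_add,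
    Finset.sum_range_add, hhead, hjunction, htail, hab τ hτ]
  norm_num

end AppendReverse

lemma rhoR_appendReverse_cross_add_eq_zero {N r τ : ℕ} {a b : ℕ → ℝ} (hhead : ∀ i < r, a i = b i)
    (hrN : r ≤ N) (hτ : 2 * N - r < τ) :
    rhoR (2 * N) (appendReverse N a b) (appendReverse N b (-a)) τ
      + rhoR (2 * N) (appendReverse N b (-a)) (appendReverse N a b) τ = 0 := by
  rw [rhoR, rhoR, ← Finset.sum_add_distrib]
  refine Finset.sum_eq_zero fun k hk => ?_
  rw [Finset.mem_range] at hk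
  simp only [appendReverse_of_lt (show k < N by omega),
    appendReverse_of_le (show N ≤ k + τ by omega),
    Pi.neg_apply, hhead k (by omega), hhead (2 * N - 1 - (k + τ)) (by omega)]
  ring

def bordered (L : ℕ) (x : ℂ) (u : ℕ → ℝ) (y : ℂ) : ℕ → ℂ :=
  fun i => if i = 0 then x else if i ≤ L then ((u (i - 1) : ℝ) : ℂ) else y

section Bordered

variable {L : ℕ} {x x' y y' : ℂ} {u v : ℕ → ℝ}

lemma rhoC_bordered {τ : ℕ} (hτ₁ : 1 ≤ τ) (hτ₂ : τ ≤ L) :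
    rhoC (L + 2) (bordered L x u y) (bordered L x' v y') τ
      = x * v (τ - 1) + rhoR L u v τ + u (L - τ) * starRingEnd ℂ y' := by
  have hmid : ∑ k ∈ Finset.range (L - τ),
      bordered L x u y (k + 1) * starRingEnd ℂ (bordered L x' v y' (k + 1 + τ)) = rhoR L u v τ := by
    rw [rhoR, Complex.ofReal_sum]
    refine Finset.sum_congr rfl fun k hk => ?_
    rw [Finset.mem_range] at hk
    simp (disch := omega) only [bordered, if_neg, if_pos, Nat.add_sub_cancel,
      show k + 1 + τ - 1 = k + τ by omega, Complex.conj_ofReal, Complex.ofReal_mul]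
  rw [rhoC, show L + 2 - τ = L - τ + 1 + 1 by omega, Finset.sum_range_succ,
    Finset.sum_range_succ', hmid]
  simp (disch := omega) only [bordered, if_neg, if_pos, show L - τ + 1 + τ = L + 1 by omega,
    Nat.add_sub_cancel, zero_add, Complex.conj_ofReal, if_true]
  ring

lemma rhoC_bordered_last :
    rhoC (L + 2) (bordered L x u y) (bordered L x' v y') (L + 1) = x * starRingEnd ℂ y' := by
  simp [rhoC, bordered, show L + 2 - (L + 1) = 1 by omega]

end Bordered

theorem isCZCP_bordered_appendReverse {N r : ℕ} {a b : ℕ → ℝ} {x₀ x₁ y₀ y₁ : ℂ}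
    (hab : IsComplementaryPair N a b) (hhead : ∀ i < r, a i = b i) (hrN : r < N)
    (h₁ : x₀ - starRingEnd ℂ y₁ = 0) (h₂ : x₁ + starRingEnd ℂ y₀ = 0) (h₃ : x₀ = x₁)
    (h₄ : starRingEnd ℂ y₀ = -starRingEnd ℂ y₁) :
    IsCZCP (2 * N + 2) (r + 1) (bordered (2 * N) x₀ (appendReverse N a b) y₀)
      (bordered (2 * N) x₁ (appendReverse N b (-a)) y₁) := by
  have hmid : ∀ τ, 1 ≤ τ → (rhoR (2 * N) (appendReverse N a b) (appendReverse N a b) τ : ℂ)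
      + rhoR (2 * N) (appendReverse N b (-a)) (appendReverse N b (-a)) τ = 0 := fun τ hτ => by
    exact_mod_cast hab.appendReverse τ hτ
  refine ⟨?_, fun τ ⟨hτ₁, hτ₂⟩ => ?_⟩
  · rintro τ (⟨hτ₁, hτ₂⟩ | ⟨hτ₁, hτ₂⟩)
    · rw [rhoC_bordered hτ₁ (by omega), rhoC_bordered hτ₁ (by omega)]
      simp only [appendReverse_of_lt (show τ - 1 < N by omega),
        appendReverse_of_le (show N ≤ 2 * N - τ by omega),
        show 2 * N - 1 - (2 * N - τ) = τ - 1 by omega,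
        Pi.neg_apply, Complex.ofReal_neg]
      linear_combination (a (τ - 1) : ℂ) * h₁ + (b (τ - 1) : ℂ) * h₂ + hmid τ hτ₁
    · rcases (show τ = 2 * N + 1 ∨ τ ≤ 2 * N by omega) with rfl | hτ₃
      · rw [rhoC_bordered_last, rhoC_bordered_last]
        linear_combination x₀ * h₄ - starRingEnd ℂ y₁ * h₃
      rw [rhoC_bordered (by omega) hτ₃, rhoC_bordered (by omega) hτ₃]
      simp only [appendReverse_of_lt (show 2 * N - τ < N by omega),
        appendReverse_of_le (show N ≤ τ - 1 by omega),
        show 2 * N - 1 - (τ - 1) = 2 * N - τ by omega,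
        Pi.neg_apply, Complex.ofReal_neg, hhead (2 * N - τ) (by omega)]
      linear_combination (b (2 * N - τ) : ℂ) * (h₃ + h₄) + hmid τ (by omega)
  · rcases (show τ = 2 * N + 1 ∨ τ ≤ 2 * N by omega) with rfl | hτ₃
    · rw [rhoC_bordered_last, rhoC_bordered_last]
      linear_combination starRingEnd ℂ y₁ * h₁ + starRingEnd ℂ y₀ * h₂
        + (starRingEnd ℂ y₁ - starRingEnd ℂ y₀) * h₄
    have hcross : (rhoR (2 * N) (appendReverse N a b) (appendReverse N b (-a)) τ : ℂ)
        + rhoR (2 * N) (appendReverse N b (-a)) (appendReverse N a b) τ = 0 := by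
      exact_mod_cast rhoR_appendReverse_cross_add_eq_zero hhead hrN.le (by omega)
    rw [rhoC_bordered (by omega) hτ₃, rhoC_bordered (by omega) hτ₃]
    simp only [appendReverse_of_lt (show 2 * N - τ < N by omega),
      appendReverse_of_le (show N ≤ τ - 1 by omega),
      show 2 * N - 1 - (τ - 1) = 2 * N - τ by omega,
      Pi.neg_apply, Complex.ofReal_neg, hhead (2 * N - τ) (by omega)]
    linear_combination (b (2 * N - τ) : ℂ) * (h₂ - h₁) + hcross

theorem stmt_7_general (β : ℕ) (hβ : 1 ≤ β)
    (P : ℕ → (ℕ → ℝ) × (ℕ → ℝ))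
    (hP1 : P 1 = (K10a, K10b))
    (hPrec : ∀ j, 1 ≤ j → j < β →
      P (j + 1) = turynPair 10 (10 ^ j) K10a K10b (P j).1 (P j).2)
    (N : ℕ) (hN : N = 10 ^ β)
    (a b : ℕ → ℝ) (ha : a = (P β).1) (hb : b = (P β).2)
    (e f : ℕ → ℝ)
    (he : ∀ i, e i = if i < N then a i else b (N - 1 - (i - N)))
    (hf : ∀ i, f i = if i < N then b i else -a (N - 1 - (i - N)))
    (x0 x1 y0 y1 : ℂ)
    (cc1 : x0 - (starRingEnd ℂ) y1 = 0) (cc2 : x1 + (starRingEnd ℂ) y0 = 0)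
    (cc3 : x0 = x1) (cc4 : (starRingEnd ℂ) y0 = -(starRingEnd ℂ) y1)
    (g h : ℕ → ℂ)
    (hg : ∀ i, g i = if i = 0 then x0 else if i ≤ 2 * N then ((e (i - 1) : ℝ) : ℂ) else y0)
    (hh : ∀ i, h i = if i = 0 then x1 else if i ≤ 2 * N then ((f (i - 1) : ℝ) : ℂ) else y1) :
    IsCZCP (2 * N + 2) (4 * N / 10 + 1) g h := by
  obtain ⟨hcompl, hhead, -⟩ :=
    iterate_turynPair isComplementaryPair_K10 eqOnHeadNegOnTail_K10 (by norm_num) P hP1 hPrec hβ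
  obtain rfl : e = appendReverse N a b := funext he
  obtain rfl : f = appendReverse N b (-a) := funext hf
  obtain rfl : g = bordered (2 * N) x0 (appendReverse N a b) y0 := funext hg
  obtain rfl : h = bordered (2 * N) x1 (appendReverse N b (-a)) y1 := funext hh
  subst ha hb
  rw [← hN] at hcompl
  have hN' : N = 10 * 10 ^ (β - 1) := by rw [hN, ← pow_succ', Nat.sub_add_cancel hβ]
  have hK : 0 < 10 ^ (β - 1) := by positivity
  generalize 10 ^ (β - 1) = K at hN' hhead hK
  rw [show 4 * N / 10 = 4 * K by omega]
  exact isCZCP_bordered_appendReverse hcompl hhead (by omega) cc1 cc2 cc3 cc4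

/-- Theorem 3 of the paper, case `N = 10^β`: let `(a, b)` be the binary GCP
of length `N = 10^β` obtained by iterating Turyn's construction on the kernel `K₁₀`,
put `c_i = b_{N-1-i}`, `d_i = -a_{N-1-i}`, `e = a‖c`, `f = b‖d` (length `2N`), and let
`x₀, x₁, y₀, y₁` be unimodular complex numbers with `x₀ - conj y₁ = 0`,
`x₁ + conj y₀ = 0`, `x₀ = x₁`, `conj y₀ = -conj y₁`.  Then
`g = (x₀, e₀, …, e_{2N-1}, y₀)` and `h = (x₁, f₀, …, f_{2N-1}, y₁)` form a
`(2N+2, 4N/10+1)`-CZCP. -/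
theorem stmt_7 (β : ℕ) (hβ : 1 ≤ β)
    (P : ℕ → (ℕ → ℝ) × (ℕ → ℝ))
    (hP1 : P 1 = (K10a, K10b))
    (hPrec : ∀ j, 1 ≤ j → j < β →
      P (j + 1) = turynPair 10 (10 ^ j) K10a K10b (P j).1 (P j).2)
    (N : ℕ) (hN : N = 10 ^ β)
    (a b : ℕ → ℝ) (ha : a = (P β).1) (hb : b = (P β).2)
    (e f : ℕ → ℝ)
    (he : ∀ i, e i = if i < N then a i else b (N - 1 - (i - N)))
    (hf : ∀ i, f i = if i < N then b i else -a (N - 1 - (i - N)))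
    (x0 x1 y0 y1 : ℂ)
    (hx0 : ‖x0‖ = 1) (hx1 : ‖x1‖ = 1)
    (hy0 : ‖y0‖ = 1) (hy1 : ‖y1‖ = 1)
    (cc1 : x0 - (starRingEnd ℂ) y1 = 0) (cc2 : x1 + (starRingEnd ℂ) y0 = 0)
    (cc3 : x0 = x1) (cc4 : (starRingEnd ℂ) y0 = -(starRingEnd ℂ) y1)
    (g h : ℕ → ℂ)
    (hg : ∀ i, g i = if i = 0 then x0 else if i ≤ 2 * N then ((e (i - 1) : ℝ) : ℂ) else y0)
    (hh : ∀ i, h i = if i = 0 then x1 else if i ≤ 2 * N then ((f (i - 1) : ℝ) : ℂ) else y1) :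
    IsCZCP (2 * N + 2) (4 * N / 10 + 1) g h :=
  stmt_7_general β hβ P hP1 hPrec N hN a b ha hb e f he hf x0 x1 y0 y1 cc1 cc2 cc3 cc4 g h hg hh
end

section
/- Let a be a binary sequence of length M and b a binary sequence of length N with M ≤ N. Assume ρ_a(τ) = −ρ_b(τ) for every 0 < τ < M, and assume ρ_b(M) = 0 whenever M < N. Define the length-(M+N) binary sequences c = a||b and d = a||(−b). Then (c,d) is an (M+N, M)-CZCP. -/
/-!
Split the correlation sum of two concatenations `a‖b`, `a'‖b'` at the junction.
For `τ ≤ min M N` it is `ρ_{a,a'}(τ) + ρ_{b,b'}(τ)` plus the terms straddling the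
junction, which change sign when `b'` is replaced by `-b'`; so they cancel in
`ρ_c + ρ_d` and leave `2 (ρ_a + ρ_b)`, which vanishes by hypothesis.
For `τ ≥ max M N` only straddling terms survive, and these cancel in both
`ρ_c + ρ_d` and `ρ_{c,d} + ρ_{d,c}`.
-/

open Finset

lemma rhoR_of_le {L τ : ℕ} (u v : ℕ → ℝ) (h : L ≤ τ) : rhoR L u v τ = 0 := by
  simp [rhoR, Nat.sub_eq_zero_of_le h]

lemma rhoR_neg_neg (L : ℕ) (u v : ℕ → ℝ) (τ : ℕ) : rhoR L (-u) (-v) τ = rhoR L u v τ := by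
  simp [rhoR]

def concat (M : ℕ) (a b : ℕ → ℝ) : ℕ → ℝ := fun i => if i < M then a i else b (i - M)

section concat

variable {M N : ℕ} {a b a' b' : ℕ → ℝ}

lemma concat_of_lt {i : ℕ} (h : i < M) : concat M a b i = a i := if_pos h

lemma concat_of_le {i : ℕ} (h : M ≤ i) : concat M a b i = b (i - M) := if_neg (by omega)

lemma rhoR_concat_of_le {τ : ℕ} (hM : τ ≤ M) (hN : τ ≤ N) :
    rhoR (M + N) (concat M a b) (concat M a' b') τ =
      rhoR M a a' τ + ∑ i ∈ range τ, a (M - τ + i) * b' i + rhoR N b b' τ := by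
  unfold rhoR
  rw [show M + N - τ = M - τ + τ + (N - τ) by omega, sum_range_add, sum_range_add]
  refine congrArg₂ (· + ·) (congrArg₂ (· + ·) ?_ ?_) ?_ <;>
    refine sum_congr rfl fun i hi => ?_ <;> rw [mem_range] at hi
  · rw [concat_of_lt (by omega), concat_of_lt (by omega)]
  · rw [concat_of_lt (by omega), concat_of_le (by omega), show M - τ + i + τ - M = i by omega]
  · rw [concat_of_le (by omega), concat_of_le (by omega),
      show M - τ + τ + i - M = i by omega, show M - τ + τ + i + τ - M = i + τ by omega]

lemma rhoR_concat_of_ge {τ : ℕ} (hM : M ≤ τ) (hN : N ≤ τ) :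
    rhoR (M + N) (concat M a b) (concat M a' b') τ =
      ∑ k ∈ range (M + N - τ), a k * b' (k + τ - M) := by
  refine sum_congr rfl fun k hk => ?_
  rw [mem_range] at hk
  rw [concat_of_lt (by omega), concat_of_le (by omega)]

end concat

theorem stmt_10_general (M N : ℕ) (hMN : M ≤ N)
    (a b : ℕ → ℝ)
    (h1 : ∀ τ : ℕ, 0 < τ → τ < M → rhoR M a a τ = -rhoR N b b τ)
    (h2 : M < N → rhoR N b b M = 0)
    (c d : ℕ → ℝ)
    (hc : ∀ i, c i = if i < M then a i else b (i - M))
    (hd : ∀ i, d i = if i < M then a i else -b (i - M)) :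
    IsCZCPR (M + N) M c d := by
  obtain rfl : c = concat M a b := funext hc
  obtain rfl : d = concat M a (-b) := funext hd
  have hab : ∀ τ, 0 < τ → τ ≤ M → rhoR M a a τ + rhoR N b b τ = 0 := by
    intro τ hτ hτM
    rcases hτM.lt_or_eq with hlt | rfl
    · rw [h1 τ hτ hlt, neg_add_cancel]
    · rcases hMN.lt_or_eq with hlt | rfl
      · rw [rhoR_of_le a a le_rfl, h2 hlt, add_zero]
      · rw [rhoR_of_le a a le_rfl, rhoR_of_le b b le_rfl, add_zero]
  refine ⟨fun τ hτ => ?_, fun τ ⟨hNτ, _⟩ => ?_⟩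
  · rcases hτ with ⟨hτ, hτM⟩ | ⟨hNτ, _⟩
    · rw [rhoR_concat_of_le hτM (hτM.trans hMN), rhoR_concat_of_le hτM (hτM.trans hMN),
        rhoR_neg_neg]
      simp only [Pi.neg_apply, mul_neg, sum_neg_distrib]
      linear_combination 2 * hab τ hτ hτM
    · rw [rhoR_concat_of_ge (by omega) (by omega), rhoR_concat_of_ge (by omega) (by omega),
        ← sum_add_distrib]
      simp
  · rw [rhoR_concat_of_ge (by omega) (by omega), rhoR_concat_of_ge (by omega) (by omega),
      ← sum_add_distrib]
    simp

/-- Theorem 6 of the paper: Let `a` be a binary sequence of length `M` and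
`b` a binary sequence of length `N`, `M ≤ N`, with `ρ_a(τ) = -ρ_b(τ)` for `0 < τ < M`,
and `ρ_b(M) = 0` whenever `M < N`.  Then `c = a‖b` and `d = a‖(-b)` form an
`(M+N, M)`-CZCP. -/
theorem stmt_10 (M N : ℕ) (hM : 0 < M) (hMN : M ≤ N)
    (a b : ℕ → ℝ) (ha : IsBinary M a) (hb : IsBinary N b)
    (h1 : ∀ τ : ℕ, 0 < τ → τ < M → rhoR M a a τ = -rhoR N b b τ)
    (h2 : M < N → rhoR N b b M = 0)
    (c d : ℕ → ℝ)
    (hc : ∀ i, c i = if i < M then a i else b (i - M))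
    (hd : ∀ i, d i = if i < M then a i else -b (i - M)) :
    IsCZCPR (M + N) M c d :=
  stmt_10_general M N hMN a b h1 h2 c d hc hd
end

section
/- Let (c,d) be a binary (N,Z)-CZCP with 2Z ≤ N. Then for every integer i with 0 ≤ i < Z: c_i·c_{N−1−i} + d_i·d_{N−1−i} = 0. (Equivalently, for each such i, exactly one of the two pairs (c_i, d_i) and (c_{N−1−i}, d_{N−1−i}) consists of equal entries, the other of opposite entries.) -/
open Finset AddCommGroup

namespace AddCommGroup.ModEq

variable {M : Type*} [AddCommGroup M] {p : M}

protected theorem finsetSum {ι : Type*} {s : Finset ι} {f g : ι → M}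
    (h : ∀ i ∈ s, f i ≡ g i [PMOD p]) : ∑ i ∈ s, f i ≡ ∑ i ∈ s, g i [PMOD p] := by
  classical
  induction s using Finset.induction_on with
  | empty => simp only [sum_empty, modEq_rfl]
  | insert a s ha ih =>
    rw [sum_insert ha, sum_insert ha]
    exact (h a (mem_insert_self a s)).add (ih fun i hi => h i (mem_insert_of_mem hi))

theorem of_sum_range_modEq_nsmul {f : ℕ → M} {a : M} {n i : ℕ}
    (h : ∀ j ≤ n, ∑ k ∈ range j, f k ≡ j • a [PMOD p]) (hi : i < n) : f i ≡ a [PMOD p] := by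
  have hsucc := h (i + 1) hi
  rw [sum_range_succ, succ_nsmul] at hsucc
  exact ((h i hi.le).add_iff_left).mp hsucc

end AddCommGroup.ModEq

section Signs

variable {R : Type*} [CommRing R] {a b : R}

theorem mul_modEq_add_sub_one (ha : a = 1 ∨ a = -1) (hb : b = 1 ∨ b = -1) :
    a * b ≡ a + b - 1 [PMOD 4] := by
  rcases ha with rfl | rfl <;> rcases hb with rfl | rfl
  case inr.inr => exact modEq_iff_eq_add_zsmul.mpr ⟨-1, by rw [neg_smul, one_smul]; ring⟩
  all_goals exact modEq_iff_eq_add_zsmul.mpr ⟨0, by rw [zero_smul]; ring⟩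

theorem add_eq_zero_of_modEq_zero [CharZero R] (ha : a = 1 ∨ a = -1) (hb : b = 1 ∨ b = -1)
    (h : a + b ≡ 0 [PMOD 4]) : a + b = 0 := by
  have hcast : ∀ z : ℤ, (z : R) ≡ 0 [PMOD 4] → z ≡ 0 [ZMOD 4] := fun z hz =>
    modEq_iff_intModEq.mp (by exact_mod_cast hz)
  rcases ha with rfl | rfl <;> rcases hb with rfl | rfl
  · exact absurd (hcast 2 (by convert h using 2; norm_num)) (by decide)
  · exact add_neg_cancel 1
  · exact neg_add_cancel 1
  · exact absurd (hcast (-2) (by convert h using 2; norm_num)) (by decide)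

theorem mul_add_mul_eq_zero_of_modEq [CharZero R] {a' b' : R} (ha : a = 1 ∨ a = -1)
    (hb : b = 1 ∨ b = -1) (ha' : a' = 1 ∨ a' = -1) (hb' : b' = 1 ∨ b' = -1)
    (h : a + b + (a' + b') ≡ 2 [PMOD 4]) : a * a' + b * b' = 0 := by
  have hsign : ∀ {x y : R}, (x = 1 ∨ x = -1) → (y = 1 ∨ y = -1) → x * y = 1 ∨ x * y = -1 := by
    rintro x y (rfl | rfl) (rfl | rfl) <;> norm_num
  refine add_eq_zero_of_modEq_zero (hsign ha ha') (hsign hb hb') ?_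
  have hprod := (mul_modEq_add_sub_one ha ha').add (mul_modEq_add_sub_one hb hb')
  have hsum : a + a' - 1 + (b + b' - 1) = a + b + (a' + b') - 2 := by ring
  rw [hsum] at hprod
  simpa only [sub_self] using hprod.trans (h.sub_right 2)

end Signs

theorem rhoR_add_rhoR_sub_add_modEq {L j : ℕ} {u v : ℕ → ℝ} (hu : IsBinary L u)
    (hv : IsBinary L v) (hj : j ≤ L) :
    rhoR L u v (L - j) + rhoR L v u (L - j) + j • 2 ≡
      ∑ k ∈ range j, (u k + v k + (u (L - 1 - k) + v (L - 1 - k))) [PMOD 4] := by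
  have hlen : L - (L - j) = j := by omega
  have hreflect : ∀ f : ℕ → ℝ, ∑ k ∈ range j, f (k + (L - j)) = ∑ k ∈ range j, f (L - 1 - k) := by
    intro f
    rw [← sum_range_reflect]
    refine sum_congr rfl fun k hk => ?_
    have : j - 1 - k + (L - j) = L - 1 - k := by have := mem_range.mp hk; omega
    rw [this]
  have hterms : ∀ k ∈ range j, u k * v (k + (L - j)) + v k * u (k + (L - j)) + 2 ≡
      u k + v k + (u (k + (L - j)) + v (k + (L - j))) [PMOD 4] := by
    intro k hk
    have hk : k < j := mem_range.mp hk
    have hkτ : k + (L - j) < L := by omega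
    have huv := mul_modEq_add_sub_one (hu k (by omega)) (hv _ hkτ)
    have hvu := mul_modEq_add_sub_one (hv k (by omega)) (hu _ hkτ)
    have hsum : u k + v (k + (L - j)) - 1 + (v k + u (k + (L - j)) - 1) + 2 =
        u k + v k + (u (k + (L - j)) + v (k + (L - j))) := by ring
    simpa only [hsum] using (huv.add hvu).add_right 2
  simpa only [rhoR, hlen, sum_add_distrib, sum_const, card_range, hreflect u, hreflect v]
    using ModEq.finsetSum hterms

/-- Property 1 of the paper: Let `(c, d)` be a binary `(N, Z)`-CZCP with
`2Z ≤ N`.  Then for every `i < Z`: `c_i·c_{N-1-i} + d_i·d_{N-1-i} = 0`. -/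
theorem stmt_12 (N Z : ℕ) (c d : ℕ → ℝ)
    (hc : IsBinary N c) (hd : IsBinary N d) (hcd : IsCZCPR N Z c d)
    (hZ : 2 * Z ≤ N) (i : ℕ) (hi : i < Z) :
    c i * c (N - 1 - i) + d i * d (N - 1 - i) = 0 := by
  have hcross : ∀ j ≤ Z, rhoR N c d (N - j) + rhoR N d c (N - j) = 0 := by
    intro j hj
    rcases Nat.eq_zero_or_pos j with rfl | hj0
    · simp only [rhoR, Nat.sub_zero, Nat.sub_self, range_zero, sum_empty, add_zero]
    · exact hcd.2 (N - j) ⟨by omega, by omega⟩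
  have hpartial : ∀ j ≤ Z, ∑ k ∈ range j, (c k + d k + (c (N - 1 - k) + d (N - 1 - k)))
      ≡ j • (2 : ℝ) [PMOD 4] := fun j hj => by
    simpa only [hcross j hj, zero_add] using
      (rhoR_add_rhoR_sub_add_modEq hc hd (by omega : j ≤ N)).symm
  exact mul_add_mul_eq_zero_of_modEq (hc i (by omega)) (hd i (by omega))
    (hc (N - 1 - i) (by omega)) (hd (N - 1 - i) (by omega))
    (ModEq.of_sum_range_modEq_nsmul hpartial hi)
end

section
/- Let (a,b) be a binary GCP of length N ≥ 2. Then a_0·b_{N−1} + b_0·a_{N−1} = 0, and consequently (a,b) is a binary (N,1)-CZCP. -/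
/-! At the extreme shift `N - 1` only one term survives in each correlation, so the Golay
condition reads `a₀ a_{N-1} + b₀ b_{N-1} = 0`. Multiplying by `a_{N-1} b_{N-1}` and using
`a_{N-1}² = b_{N-1}² = 1` turns it into the cross condition `a₀ b_{N-1} + b₀ a_{N-1} = 0`,
which is all that (C2) asks for `Z = 1`; (C1) for `Z = 1` only involves shifts `1` and `N - 1`,
where the Golay condition holds. -/

theorem rhoR_pred_self {L : ℕ} (hL : 1 ≤ L) (u v : ℕ → ℝ) :
    rhoR L u v (L - 1) = u 0 * v (L - 1) := by
  simp [rhoR, Nat.sub_sub_self hL]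

theorem IsBinary.mul_self_eq_one {L : ℕ} {u : ℕ → ℝ} (hu : IsBinary L u) {i : ℕ} (hi : i < L) :
    u i * u i = 1 := by
  rcases hu i hi with h | h <;> simp [h]

theorem add_mul_swap_eq_zero {R : Type*} [CommRing R] {x y z w : R}
    (hy : y * y = 1) (hw : w * w = 1) (h : x * y + z * w = 0) : x * w + z * y = 0 :=
  calc x * w + z * y = (x * y + z * w) * (y * w) := by
        linear_combination (-(x * w)) * hy - z * y * hw
    _ = 0 := by rw [h, zero_mul]

namespace IsGCP

variable {N : ℕ} {a b : ℕ → ℝ}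

theorem endpoint_cross (hN : 2 ≤ N) (hab : IsGCP N a b) :
    a 0 * b (N - 1) + b 0 * a (N - 1) = 0 := by
  obtain ⟨ha, hb, hsum⟩ := hab
  have hauto : a 0 * a (N - 1) + b 0 * b (N - 1) = 0 := by
    simpa only [rhoR_pred_self (by omega : 1 ≤ N)] using hsum (N - 1) (by omega) le_rfl
  exact add_mul_swap_eq_zero (ha.mul_self_eq_one (by omega)) (hb.mul_self_eq_one (by omega)) hauto

theorem isCZCPR_one (hN : 2 ≤ N) (hab : IsGCP N a b) : IsCZCPR N 1 a b := by
  refine ⟨?_, ?_⟩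
  · rintro τ (⟨h1, h2⟩ | ⟨h1, h2⟩)
    · exact hab.2.2 τ h1 (by omega)
    · exact hab.2.2 τ (by omega) h2
  · rintro τ ⟨h1, h2⟩
    obtain rfl : τ = N - 1 := by omega
    rw [rhoR_pred_self (by omega), rhoR_pred_self (by omega)]
    exact hab.endpoint_cross hN

end IsGCP

/-- Theorem 7 of the paper: every binary GCP `(a, b)` of length `N ≥ 2`
satisfies `a₀·b_{N-1} + b₀·a_{N-1} = 0`, and consequently is a binary `(N, 1)`-CZCP. -/
theorem stmt_13 (N : ℕ) (hN : 2 ≤ N) (a b : ℕ → ℝ) (hab : IsGCP N a b) :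
    a 0 * b (N - 1) + b 0 * a (N - 1) = 0 ∧ IsCZCPR N 1 a b :=
  ⟨hab.endpoint_cross hN, hab.isCZCPR_one hN⟩
end
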